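/- arXiv:2604.25535 — 2 statements merged into one kernel-verified Lean document; each statement's English description precedes it below -/
import Mathlib

section
/- Let $g:\mathbb{R}_+\to\mathbb{R}_+$ be defined by $g(x) = \mathbb{E}[\tanh(\sqrt{x}\,\xi + h)^2]$ where $\xi$ is a standard Gaussian random variable and $h \in \mathbb{R}$. Then $g$ is $1$-Lipschitz on $\mathbb{R}_+$. -/
open MeasureTheory ProbabilityTheory Real Set Filter Topology
open scoped ENNReal NNReal

namespace Stmt0Aux

noncomputable def φ : ℝ → ℝ := gaussianPDFReal 0 1

lemma φ_eq : φ = fun ξ : ℝ => (Real.sqrt (2 * π))⁻¹ * Real.exp (-(1/2) * ξ ^ 2) := by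
  funext ξ
  simp only [φ, gaussianPDFReal, NNReal.coe_one, mul_one, sub_zero]
  congr 2
  ring

lemma φ_nonneg (ξ : ℝ) : 0 ≤ φ ξ := gaussianPDFReal_nonneg 0 1 ξ

lemma φ_meas : Measurable φ := measurable_gaussianPDFReal 0 1

lemma hasDerivAt_φ (ξ : ℝ) : HasDerivAt φ (-ξ * φ ξ) ξ := by
  have h1 : HasDerivAt (fun ξ : ℝ => -(1/2) * ξ ^ 2) (-ξ) ξ := by
    simpa using (hasDerivAt_pow 2 ξ).const_mul (-(1/2) : ℝ)
  have h2 := (h1.exp).const_mul ((Real.sqrt (2 * π))⁻¹)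
  rw [φ_eq]
  exact h2.congr_deriv (by beta_reduce; ring)

lemma int_φ : Integrable φ := by
  rw [φ_eq]
  exact (integrable_exp_neg_mul_sq (by norm_num : (0:ℝ) < 1/2)).const_mul _

lemma integral_φ : ∫ ξ, φ ξ = 1 := integral_gaussianPDFReal_eq_one 0 one_ne_zero

lemma int_abs_mul_φ : Integrable (fun ξ => |ξ| * φ ξ) := by
  have h := ((integrable_mul_exp_neg_mul_sq (by norm_num : (0:ℝ) < 1/2)).abs).const_mul
    ((Real.sqrt (2 * π))⁻¹)
  rw [φ_eq]
  convert h using 2 with ξ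
  rw [abs_mul, abs_of_pos (Real.exp_pos _)]
  ring

lemma integral_gauss (f : ℝ → ℝ) (hf : Measurable f) :
    ∫ ξ, f ξ ∂(gaussianReal 0 1) = ∫ ξ, f ξ * φ ξ := by
  rw [gaussianReal_of_var_ne_zero 0 one_ne_zero]
  have h1 : (volume : Measure ℝ).withDensity (gaussianPDF 0 1)
      = (volume : Measure ℝ).withDensity (fun x => ((φ x).toNNReal : ℝ≥0∞)) := rfl
  rw [h1, integral_withDensity_eq_integral_smul (φ_meas.real_toNNReal) f]
  congr 1
  funext ξ
  rw [NNReal.smul_def, Real.coe_toNNReal _ (φ_nonneg ξ), smul_eq_mul]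
  ring

/-! ### tanh facts -/

lemma tanh_sq_lt_one (x : ℝ) : Real.tanh x ^ 2 < 1 := by
  have hc : 0 < Real.cosh x := Real.cosh_pos x
  rw [Real.tanh_eq_sinh_div_cosh, div_pow, div_lt_one (by positivity)]
  nlinarith [Real.cosh_sq x]

lemma hasDerivAt_tanh (x : ℝ) : HasDerivAt Real.tanh (1 - Real.tanh x ^ 2) x := by
  have hc : Real.cosh x ≠ 0 := (Real.cosh_pos x).ne'
  have h := (Real.hasDerivAt_sinh x).div (Real.hasDerivAt_cosh x) hc
  have key : 1 - Real.tanh x ^ 2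
      = (Real.cosh x * Real.cosh x - Real.sinh x * Real.sinh x) / Real.cosh x ^ 2 := by
    rw [Real.tanh_eq_sinh_div_cosh]
    field_simp
  rw [key, funext Real.tanh_eq_sinh_div_cosh]
  exact h

noncomputable def F (z : ℝ) : ℝ := Real.tanh z ^ 2
noncomputable def T (z : ℝ) : ℝ := 2 * Real.tanh z * (1 - Real.tanh z ^ 2)
noncomputable def S (z : ℝ) : ℝ := (2 - 6 * Real.tanh z ^ 2) * (1 - Real.tanh z ^ 2)

lemma hasDerivAt_F (z : ℝ) : HasDerivAt F (T z) z := by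
  have h := (hasDerivAt_tanh z).pow 2
  exact h.congr_deriv (by simp only [T, Nat.cast_ofNat, pow_one]; ring)

lemma hasDerivAt_T (z : ℝ) : HasDerivAt T (S z) z := by
  have hT : T = fun z => 2 * Real.tanh z - 2 * Real.tanh z ^ 3 := by
    funext z; simp only [T]; ring
  rw [hT]
  have := (((hasDerivAt_tanh z).const_mul 2)).sub (((hasDerivAt_tanh z).pow 3).const_mul 2)
  exact this.congr_deriv (by simp only [S, Nat.cast_ofNat]; ring)

lemma abs_F_le (z : ℝ) : |F z| ≤ 1 := by
  have h := tanh_sq_lt_one z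
  have := sq_nonneg (Real.tanh z)
  rw [abs_le]; constructor <;> simp only [F] <;> nlinarith

lemma abs_tanh_le (z : ℝ) : -1 ≤ Real.tanh z ∧ Real.tanh z ≤ 1 := by
  have h1 := tanh_sq_lt_one z
  constructor <;> nlinarith

lemma abs_T_le (z : ℝ) : |T z| ≤ 2 := by
  obtain ⟨ha, hb⟩ := abs_tanh_le z
  have key1 : 0 ≤ (1 - Real.tanh z) * (Real.tanh z + 1) ^ 2 :=
    mul_nonneg (by linarith) (sq_nonneg _)
  have key2 : 0 ≤ (1 + Real.tanh z) * (Real.tanh z - 1) ^ 2 :=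
    mul_nonneg (by linarith) (sq_nonneg _)
  rw [abs_le]
  constructor <;> simp only [T] <;> nlinarith [sq_nonneg (Real.tanh z)]

lemma abs_S_le (z : ℝ) : |S z| ≤ 2 := by
  have h1 := tanh_sq_lt_one z
  have h0 := sq_nonneg (Real.tanh z)
  rw [abs_le]; constructor <;> simp only [S] <;> nlinarith

lemma continuous_tanh : Continuous Real.tanh := by
  have heq : Real.tanh = fun x => Real.sinh x / Real.cosh x :=
    funext fun x => Real.tanh_eq_sinh_div_cosh x
  rw [heq]
  exact Real.continuous_sinh.div Real.continuous_cosh fun x => (Real.cosh_pos x).ne'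

lemma continuous_F : Continuous F := (continuous_tanh.pow 2)
lemma continuous_T : Continuous T :=
  (continuous_const.mul continuous_tanh).mul (continuous_const.sub (continuous_tanh.pow 2))
lemma continuous_S : Continuous S :=
  (continuous_const.sub (continuous_const.mul (continuous_tanh.pow 2))).mul
    (continuous_const.sub (continuous_tanh.pow 2))

lemma φ_cont : Continuous φ := by
  rw [φ_eq]
  exact continuous_const.mul ((continuous_const.mul (continuous_pow 2)).rexp)

lemma int_bdd_mul (G : ℝ → ℝ) (hG : Continuous G) (C : ℝ) (hC : ∀ z, |G z| ≤ C) :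
    Integrable (fun ξ => G ξ * φ ξ) := by
  refine (int_φ.const_mul C).mono' ((hG.mul φ_cont).aestronglyMeasurable) ?_
  filter_upwards with ξ
  rw [Real.norm_eq_abs, abs_mul, abs_of_nonneg (φ_nonneg ξ)]
  exact mul_le_mul_of_nonneg_right (hC ξ) (φ_nonneg ξ)

lemma int_bdd_mul_lin (G : ℝ → ℝ) (hG : Continuous G) (C : ℝ) (hC : ∀ z, |G z| ≤ C) :
    Integrable (fun ξ => G ξ * (ξ * φ ξ)) := by
  refine (int_abs_mul_φ.const_mul C).mono'
    ((hG.mul (continuous_id.mul φ_cont)).aestronglyMeasurable) ?_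
  filter_upwards with ξ
  rw [Real.norm_eq_abs, abs_mul, abs_mul, abs_of_nonneg (φ_nonneg ξ)]
  exact mul_le_mul_of_nonneg_right (hC ξ)
    (mul_nonneg (abs_nonneg _) (φ_nonneg ξ))

noncomputable def g (h x : ℝ) : ℝ := ∫ ξ, F (Real.sqrt x * ξ + h) * φ ξ

lemma cont_affine (c h : ℝ) : Continuous (fun ξ : ℝ => c * ξ + h) :=
  (continuous_const.mul continuous_id).add continuous_const

lemma int_F (h c : ℝ) : Integrable (fun ξ => F (c * ξ + h) * φ ξ) :=
  int_bdd_mul _ (continuous_F.comp (cont_affine c h)) 1 (fun _ => abs_F_le _)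

lemma hasDerivAt_g (h : ℝ) {x : ℝ} (hx : 0 < x) :
    HasDerivAt (g h)
      (∫ ξ, T (Real.sqrt x * ξ + h) * ((2 * Real.sqrt x)⁻¹ * ξ) * φ ξ) x := by
  have hx2 : 0 < x / 2 := by linarith
  have hsq2 : 0 < Real.sqrt (x / 2) := Real.sqrt_pos.2 hx2
  have key := hasDerivAt_integral_of_dominated_loc_of_deriv_le (μ := volume)
    (F := fun y ξ => F (Real.sqrt y * ξ + h) * φ ξ)
    (F' := fun y ξ => T (Real.sqrt y * ξ + h) * ((2 * Real.sqrt y)⁻¹ * ξ) * φ ξ)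
    (x₀ := x) (bound := fun ξ => 2 * ((2 * Real.sqrt (x / 2))⁻¹ * |ξ|) * φ ξ)
    (s := Metric.ball x (x / 2)) (Metric.ball_mem_nhds x hx2)
    (Filter.Eventually.of_forall fun y => (int_F h _).aestronglyMeasurable)
    (int_F h _)
    ((((continuous_T.comp (cont_affine _ h)).mul
      (continuous_const.mul continuous_id)).mul φ_cont).aestronglyMeasurable)
    ?_ ?_ ?_
  · exact key.2
  · -- bound
    filter_upwards with ξ
    intro y hy
    have hy2 : x / 2 < y := by
      rw [Metric.mem_ball, Real.dist_eq] at hy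
      have := abs_lt.1 hy; linarith [this.1]
    have hys : Real.sqrt (x / 2) ≤ Real.sqrt y := Real.sqrt_le_sqrt (by linarith)
    have hyp : 0 < Real.sqrt y := lt_of_lt_of_le hsq2 hys
    have hinv : (2 * Real.sqrt y)⁻¹ ≤ (2 * Real.sqrt (x / 2))⁻¹ := by
      apply inv_anti₀ (by linarith) (by linarith)
    rw [Real.norm_eq_abs, abs_mul, abs_mul, abs_of_nonneg (φ_nonneg ξ), abs_mul]
    apply mul_le_mul_of_nonneg_right _ (φ_nonneg ξ)
    have e1 : |(2 * Real.sqrt y)⁻¹| = (2 * Real.sqrt y)⁻¹ :=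
      abs_of_nonneg (inv_nonneg.2 (by linarith))
    rw [e1]
    calc |T (Real.sqrt y * ξ + h)| * ((2 * Real.sqrt y)⁻¹ * |ξ|)
        ≤ 2 * ((2 * Real.sqrt y)⁻¹ * |ξ|) := by
          apply mul_le_mul_of_nonneg_right (abs_T_le _)
          exact mul_nonneg (inv_nonneg.2 (by linarith)) (abs_nonneg _)
      _ ≤ 2 * ((2 * Real.sqrt (x / 2))⁻¹ * |ξ|) := by
          have := mul_le_mul_of_nonneg_right hinv (abs_nonneg ξ)
          linarith
  · -- bound integrable
    have := (int_abs_mul_φ.const_mul (2 * (2 * Real.sqrt (x / 2))⁻¹))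
    apply this.congr
    filter_upwards with ξ
    ring
  · -- differentiability
    filter_upwards with ξ
    intro y hy
    have hy2 : x / 2 < y := by
      rw [Metric.mem_ball, Real.dist_eq] at hy
      have := abs_lt.1 hy; linarith [this.1]
    have hy0 : y ≠ 0 := ne_of_gt (by linarith : (0:ℝ) < y)
    have hs : HasDerivAt Real.sqrt (1 / (2 * Real.sqrt y)) y := Real.hasDerivAt_sqrt hy0
    have ha : HasDerivAt (fun y => Real.sqrt y * ξ + h) (1 / (2 * Real.sqrt y) * ξ) y :=
      (hs.mul_const ξ).add_const h
    have h1 : HasDerivAt (fun y => F (Real.sqrt y * ξ + h))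
        (T (Real.sqrt y * ξ + h) * (1 / (2 * Real.sqrt y) * ξ)) y :=
      (hasDerivAt_F _).comp y ha
    have h2 := h1.mul_const (φ ξ)
    rw [show T (Real.sqrt y * ξ + h) * ((2 * Real.sqrt y)⁻¹ * ξ) * φ ξ
        = T (Real.sqrt y * ξ + h) * (1 / (2 * Real.sqrt y) * ξ) * φ ξ by rw [one_div]]
    exact h2

lemma φ_tendsto {l : Filter ℝ} (hl : Tendsto (fun ξ : ℝ => ξ ^ 2) l atTop) :
    Tendsto φ l (𝓝 0) := by
  rw [φ_eq]
  have h1 : Tendsto (fun ξ : ℝ => -(1/2) * ξ ^ 2) l atBot :=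
    Tendsto.const_mul_atTop_of_neg (by norm_num) hl
  have h2 := (Real.tendsto_exp_atBot.comp h1).const_mul ((Real.sqrt (2 * π))⁻¹)
  simpa using h2

lemma sq_tendsto_atTop : Tendsto (fun ξ : ℝ => ξ ^ 2) atTop atTop :=
  tendsto_pow_atTop two_ne_zero

lemma sq_tendsto_atBot : Tendsto (fun ξ : ℝ => ξ ^ 2) atBot atTop := by
  have h1 : Tendsto (fun ξ : ℝ => -ξ) atBot atTop := tendsto_neg_atBot_atTop
  have h2 : Tendsto (fun ξ : ℝ => (-ξ) ^ 2) atBot atTop :=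
    (tendsto_pow_atTop (n := 2) (by norm_num)).comp h1
  exact h2.congr fun ξ => neg_sq ξ

lemma ibp (h : ℝ) {x : ℝ} (hx : 0 < x) :
    ∫ ξ, T (Real.sqrt x * ξ + h) * ξ * φ ξ
      = Real.sqrt x * ∫ ξ, S (Real.sqrt x * ξ + h) * φ ξ := by
  have hsx : 0 < Real.sqrt x := Real.sqrt_pos.2 hx
  set c := Real.sqrt x with hc
  set G : ℝ → ℝ := fun ξ => T (c * ξ + h) * φ ξ with hG
  set G' : ℝ → ℝ := fun ξ => c * S (c * ξ + h) * φ ξ - T (c * ξ + h) * ξ * φ ξ with hG'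
  have hderiv : ∀ ξ : ℝ, HasDerivAt G (G' ξ) ξ := by
    intro ξ
    have ha : HasDerivAt (fun ξ : ℝ => c * ξ + h) c ξ := by
      simpa using ((hasDerivAt_id ξ).const_mul c).add_const h
    have h1 := ((hasDerivAt_T (c * ξ + h)).comp ξ ha).mul (hasDerivAt_φ ξ)
    exact h1.congr_deriv (by simp only [hG', Function.comp]; ring)
  have hint1 : Integrable (fun ξ => c * S (c * ξ + h) * φ ξ) := by
    have := (int_bdd_mul (fun ξ => S (c * ξ + h))
      (continuous_S.comp (cont_affine c h)) 2 (fun _ => abs_S_le _)).const_mul c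
    apply this.congr
    filter_upwards with ξ
    ring
  have hint2 : Integrable (fun ξ => T (c * ξ + h) * ξ * φ ξ) := by
    have := int_bdd_mul_lin (fun ξ => T (c * ξ + h))
      (continuous_T.comp (cont_affine c h)) 2 (fun _ => abs_T_le _)
    apply this.congr
    filter_upwards with ξ
    ring
  have hintG' : Integrable G' := hint1.sub hint2
  have hbnd : ∀ ξ, ‖G ξ‖ ≤ 2 * φ ξ := by
    intro ξ
    rw [Real.norm_eq_abs, hG, abs_mul, abs_of_nonneg (φ_nonneg ξ)]
    exact mul_le_mul_of_nonneg_right (abs_T_le _) (φ_nonneg ξ)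
  have hφtop : Tendsto (fun ξ => 2 * φ ξ) atTop (𝓝 0) := by
    simpa using (φ_tendsto sq_tendsto_atTop).const_mul 2
  have hφbot : Tendsto (fun ξ => 2 * φ ξ) atBot (𝓝 0) := by
    simpa using (φ_tendsto sq_tendsto_atBot).const_mul 2
  have htop : Tendsto G atTop (𝓝 0) := squeeze_zero_norm hbnd hφtop
  have hbot : Tendsto G atBot (𝓝 0) := squeeze_zero_norm hbnd hφbot
  have hIoi : ∫ ξ in Ioi (0:ℝ), G' ξ = 0 - G 0 :=
    integral_Ioi_of_hasDerivAt_of_tendsto (hderiv 0).continuousAt.continuousWithinAt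
      (fun y _ => hderiv y) hintG'.integrableOn htop
  have hIic : ∫ ξ in Iic (0:ℝ), G' ξ = G 0 - 0 :=
    integral_Iic_of_hasDerivAt_of_tendsto (hderiv 0).continuousAt.continuousWithinAt
      (fun y _ => hderiv y) hintG'.integrableOn hbot
  have hzero : ∫ ξ, G' ξ = 0 := by
    rw [← intervalIntegral.integral_Iic_add_Ioi hintG'.integrableOn hintG'.integrableOn, hIoi, hIic]
    ring
  have hsub : ∫ ξ, G' ξ
      = (∫ ξ, c * S (c * ξ + h) * φ ξ) - ∫ ξ, T (c * ξ + h) * ξ * φ ξ :=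
    integral_sub hint1 hint2
  have hpull : ∫ ξ, c * S (c * ξ + h) * φ ξ = c * ∫ ξ, S (c * ξ + h) * φ ξ := by
    rw [← integral_const_mul]
    congr 1
    funext ξ
    ring
  rw [hzero, hpull] at hsub
  linarith

noncomputable def D (h x : ℝ) : ℝ := (1/2) * ∫ ξ, S (Real.sqrt x * ξ + h) * φ ξ

lemma hasDerivAt_g' (h : ℝ) {x : ℝ} (hx : 0 < x) : HasDerivAt (g h) (D h x) x := by
  have hsx : 0 < Real.sqrt x := Real.sqrt_pos.2 hx
  have h1 := hasDerivAt_g h hx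
  have h2 : (∫ ξ, T (Real.sqrt x * ξ + h) * ((2 * Real.sqrt x)⁻¹ * ξ) * φ ξ)
      = (2 * Real.sqrt x)⁻¹ * ∫ ξ, T (Real.sqrt x * ξ + h) * ξ * φ ξ := by
    rw [← integral_const_mul]
    congr 1
    funext ξ
    ring
  rw [h2, ibp h hx] at h1
  convert h1 using 1
  rw [D]
  field_simp

lemma abs_D_le (h x : ℝ) : |D h x| ≤ 1 := by
  have hb : |∫ ξ, S (Real.sqrt x * ξ + h) * φ ξ| ≤ ∫ ξ, 2 * φ ξ := by
    rw [← Real.norm_eq_abs]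
    apply norm_integral_le_of_norm_le (int_φ.const_mul 2)
    filter_upwards with ξ
    rw [Real.norm_eq_abs, abs_mul, abs_of_nonneg (φ_nonneg ξ)]
    exact mul_le_mul_of_nonneg_right (abs_S_le _) (φ_nonneg ξ)
  have h2 : ∫ ξ, 2 * φ ξ = 2 := by
    rw [integral_const_mul, integral_φ]; norm_num
  rw [D, abs_mul]
  rw [h2] at hb
  calc |1/2| * |∫ ξ, S (Real.sqrt x * ξ + h) * φ ξ| ≤ |1/2| * 2 :=
        mul_le_mul_of_nonneg_left hb (abs_nonneg _)
    _ = 1 := by rw [abs_of_pos (by norm_num : (0:ℝ) < 1/2)]; norm_num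

lemma g_lip_pos (h : ℝ) {x y : ℝ} (hx : 0 < x) (hy : 0 < y) :
    |g h x - g h y| ≤ |x - y| := by
  have := Convex.norm_image_sub_le_of_norm_hasDerivWithin_le
    (f := g h) (f' := D h) (C := 1) (s := Ioi (0:ℝ))
    (fun z hz => (hasDerivAt_g' h hz).hasDerivWithinAt)
    (fun z _ => by simpa [Real.norm_eq_abs] using abs_D_le h z)
    (convex_Ioi 0) hy hx
  simpa [Real.norm_eq_abs] using this

lemma F_lip (a b : ℝ) : |F a - F b| ≤ 2 * |a - b| := by
  have := Convex.norm_image_sub_le_of_norm_hasDerivWithin_le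
    (f := F) (f' := T) (C := 2) (s := (univ : Set ℝ))
    (fun z _ => (hasDerivAt_F z).hasDerivWithinAt)
    (fun z _ => by simpa [Real.norm_eq_abs] using abs_T_le z)
    convex_univ (mem_univ b) (mem_univ a)
  simpa [Real.norm_eq_abs] using this

lemma g_holder (h x y : ℝ) :
    |g h x - g h y| ≤ (2 * ∫ ξ, |ξ| * φ ξ) * |Real.sqrt x - Real.sqrt y| := by
  rw [g, g, ← integral_sub (int_F h _) (int_F h _)]
  have hb := norm_integral_le_of_norm_le
    (f := fun ξ => F (Real.sqrt x * ξ + h) * φ ξ - F (Real.sqrt y * ξ + h) * φ ξ)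
    (int_abs_mul_φ.const_mul (2 * |Real.sqrt x - Real.sqrt y|)) ?_
  · rw [integral_const_mul] at hb
    rw [Real.norm_eq_abs] at hb
    calc |∫ ξ, (F (Real.sqrt x * ξ + h) * φ ξ - F (Real.sqrt y * ξ + h) * φ ξ)|
        ≤ 2 * |Real.sqrt x - Real.sqrt y| * ∫ ξ, |ξ| * φ ξ := hb
      _ = (2 * ∫ ξ, |ξ| * φ ξ) * |Real.sqrt x - Real.sqrt y| := by ring
  · filter_upwards with ξ
    rw [Real.norm_eq_abs, ← sub_mul, abs_mul, abs_of_nonneg (φ_nonneg ξ)]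
    have h1 : |F (Real.sqrt x * ξ + h) - F (Real.sqrt y * ξ + h)|
        ≤ 2 * (|Real.sqrt x - Real.sqrt y| * |ξ|) := by
      have := F_lip (Real.sqrt x * ξ + h) (Real.sqrt y * ξ + h)
      calc |F (Real.sqrt x * ξ + h) - F (Real.sqrt y * ξ + h)|
          ≤ 2 * |(Real.sqrt x * ξ + h) - (Real.sqrt y * ξ + h)| := this
        _ = 2 * (|Real.sqrt x - Real.sqrt y| * |ξ|) := by
            rw [← abs_mul]; congr 1; ring
    calc |F (Real.sqrt x * ξ + h) - F (Real.sqrt y * ξ + h)| * φ ξ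
        ≤ 2 * (|Real.sqrt x - Real.sqrt y| * |ξ|) * φ ξ :=
          mul_le_mul_of_nonneg_right h1 (φ_nonneg ξ)
      _ = 2 * |Real.sqrt x - Real.sqrt y| * (|ξ| * φ ξ) := by ring

lemma g_lip_zero (h : ℝ) {x : ℝ} (hx : 0 ≤ x) : |g h x - g h 0| ≤ x := by
  rcases eq_or_lt_of_le hx with rfl | hx'
  · simp
  set C := 2 * ∫ ξ, |ξ| * φ ξ with hC
  have hC0 : 0 ≤ C := by
    apply mul_nonneg (by norm_num)
    exact integral_nonneg fun ξ => mul_nonneg (abs_nonneg _) (φ_nonneg ξ)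
  apply le_of_forall_pos_le_add
  intro δ hδ
  set ε := min x ((δ / (C + 1)) ^ 2) with hε
  have hε0 : 0 < ε := lt_min hx' (by positivity)
  have hεx : ε ≤ x := min_le_left _ _
  have hsε : Real.sqrt ε ≤ δ / (C + 1) := by
    calc Real.sqrt ε ≤ Real.sqrt ((δ / (C + 1)) ^ 2) :=
          Real.sqrt_le_sqrt (min_le_right _ _)
      _ = δ / (C + 1) := Real.sqrt_sq (by positivity)
  calc |g h x - g h 0| ≤ |g h x - g h ε| + |g h ε - g h 0| := abs_sub_le _ _ _
    _ ≤ |x - ε| + C * |Real.sqrt ε - Real.sqrt 0| :=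
        add_le_add (g_lip_pos h hx' hε0) (g_holder h ε 0)
    _ ≤ x + δ := by
        rw [Real.sqrt_zero, sub_zero, abs_of_nonneg (Real.sqrt_nonneg _),
          abs_of_nonneg (by linarith : (0:ℝ) ≤ x - ε)]
        have h1 : C * Real.sqrt ε ≤ C * (δ / (C + 1)) :=
          mul_le_mul_of_nonneg_left hsε hC0
        have h2 : C * (δ / (C + 1)) ≤ δ := by
          rw [← mul_div_assoc, div_le_iff₀ (by positivity : (0:ℝ) < C + 1)]
          nlinarith
        nlinarith

lemma g_lip (h : ℝ) (x y : ℝ) (hx : 0 ≤ x) (hy : 0 ≤ y) :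
    |g h x - g h y| ≤ |x - y| := by
  rcases eq_or_lt_of_le hx with rfl | hx'
  · rw [abs_sub_comm, abs_sub_comm (0:ℝ) y]
    calc |g h y - g h 0| ≤ y := g_lip_zero h hy
      _ = |y - 0| := by rw [sub_zero, abs_of_nonneg hy]
  · rcases eq_or_lt_of_le hy with rfl | hy'
    · calc |g h x - g h 0| ≤ x := g_lip_zero h hx
        _ = |x - 0| := by rw [sub_zero, abs_of_nonneg hx]
    · exact g_lip_pos h hx' hy'

lemma gauss_eq (h x : ℝ) :
    (∫ ξ, Real.tanh (Real.sqrt x * ξ + h) ^ 2 ∂(gaussianReal 0 1)) = g h x := by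
  have hm : Measurable fun ξ => F (Real.sqrt x * ξ + h) :=
    (continuous_F.comp (cont_affine _ h)).measurable
  have := integral_gauss (fun ξ => F (Real.sqrt x * ξ + h)) hm
  simp only [F] at this
  rw [this, g]
  simp only [F]

end Stmt0Aux

open MeasureTheory ProbabilityTheory

/-- the function `g x = E[tanh(√x ξ + h)²]` (ξ standard Gaussian)
is 1-Lipschitz on the nonnegative reals. -/
theorem stmt0 (h : ℝ) :
    ∀ x y : ℝ, 0 ≤ x → 0 ≤ y →
      |(∫ ξ, Real.tanh (Real.sqrt x * ξ + h) ^ 2 ∂(gaussianReal 0 1)) -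
        (∫ ξ, Real.tanh (Real.sqrt y * ξ + h) ^ 2 ∂(gaussianReal 0 1))| ≤ |x - y| := by
  intro x y hx hy
  rw [Stmt0Aux.gauss_eq h x, Stmt0Aux.gauss_eq h y]
  exact Stmt0Aux.g_lip h x y hx hy
end

section
/- Let $\psi:\{0,\dots,n-1\}\to\mathbb{R}_+$ satisfy $\psi(i)\le C_s/K$, $\sum_i \psi(i) = 1/2$, and $\mathrm{supp}(\psi)\subset\{1,\dots,K\}$. Let $S$ be the $n\times n$ Toeplitz matrix $S_{ij} = \psi(|i-j|)$ and let $S^\circ$ be its circulant completion (the symmetric circulant matrix whose first row is $(\psi(0),\dots,\psi(K),0,\dots,0,\psi(K),\dots,\psi(1))$). Then the difference of Hamiltonians $E(\sigma) = \frac12\sigma^T(\widetilde W - W)\sigma$, where $W, \widetilde W$ are Gaussian with variance profiles $tS, tS^\circ$ coupled via a common GOE matrix, satisfies $\mathbb{E}E(\sigma)^2 \le t K$ for every $\sigma \in \{-1,1\}^n$, and hence the free energies satisfy $0 \le \widetilde F_n - F_n \le tK/(2n)$. -/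
open MeasureTheory ProbabilityTheory

/-- The space of Ising spin configurations on `n` sites. -/
abbrev SpinConf'' (n : ℕ) := Fin n → ({-1, 1} : Finset ℝ)

open MeasureTheory ProbabilityTheory Real Filter
open scoped NNReal ENNReal

namespace Stmt19Aux


lemma sq_le_exp_add_exp (a : ℝ) : a ^ 2 ≤ Real.exp a + Real.exp (-a) - 2 := by
  have key : ∀ b : ℝ, 0 ≤ b → b ^ 2 ≤ Real.exp b + Real.exp (-b) - 2 := by
    intro b hb
    have hs : b / 2 ≤ Real.sinh (b / 2) := by
      rcases eq_or_lt_of_le hb with h0 | h0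
      · simp [← h0]
      · exact (Real.self_lt_sinh_iff.2 (by linarith)).le
    rw [Real.sinh_eq] at hs
    have e1 : Real.exp (b/2) * Real.exp (b/2) = Real.exp b := by
      rw [← Real.exp_add]; ring_nf
    have e2 : Real.exp (-(b/2)) * Real.exp (-(b/2)) = Real.exp (-b) := by
      rw [← Real.exp_add]; ring_nf
    have e3 : Real.exp (b/2) * Real.exp (-(b/2)) = 1 := by
      rw [← Real.exp_add]; simp
    nlinarith [hs, e1, e2, e3, Real.exp_pos (b/2), Real.exp_pos (-(b/2))]
  rcases le_total 0 a with ha | ha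
  · exact key a ha
  · have := key (-a) (by linarith)
    simpa [neg_neg, add_comm] using this

lemma abs_le_exp_add_exp (a : ℝ) : |a| ≤ Real.exp a + Real.exp (-a) := by
  rcases le_total 0 a with ha | ha
  · rw [abs_of_nonneg ha]
    nlinarith [Real.add_one_le_exp a, Real.exp_pos (-a)]
  · rw [abs_of_nonpos ha]
    nlinarith [Real.add_one_le_exp (-a), Real.exp_pos a]

lemma gaussianReal_eq :
    gaussianReal 0 1 = MeasureTheory.volume.withDensity
      (fun x => ((Real.toNNReal (gaussianPDFReal 0 1 x) : ℝ≥0) : ℝ≥0∞)) := by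
  rw [gaussianReal_of_var_ne_zero 0 one_ne_zero]
  rfl

lemma pdf_mul_exp_eq (c : ℝ) (x : ℝ) :
    gaussianPDFReal 0 1 x * Real.exp (c * x)
      = (Real.sqrt (2 * Real.pi))⁻¹ * (Real.exp (c ^ 2 / 2)
          * Real.exp (-(1/2) * (x - c) ^ 2)) := by
  simp only [gaussianPDFReal]
  rw [mul_assoc, ← Real.exp_add, ← Real.exp_add]
  norm_num
  left
  ring

lemma integrable_pdf_mul_exp (c : ℝ) :
    Integrable (fun x => gaussianPDFReal 0 1 x * Real.exp (c * x)) := by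
  have h2 : Integrable (fun x : ℝ => Real.exp (-(1/2) * (x - c) ^ 2)) := by
    exact (integrable_exp_neg_mul_sq (by norm_num : (0:ℝ) < 1/2)).comp_sub_right c
  have h3 := (h2.const_mul (Real.exp (c ^ 2 / 2))).const_mul ((Real.sqrt (2 * Real.pi))⁻¹)
  exact h3.congr (Eventually.of_forall fun x => (pdf_mul_exp_eq c x).symm)

lemma integral_pdf_mul_exp (c : ℝ) :
    ∫ x, gaussianPDFReal 0 1 x * Real.exp (c * x) = Real.exp (c ^ 2 / 2) := by
  simp_rw [pdf_mul_exp_eq c]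
  rw [integral_const_mul, integral_const_mul]
  have h1 : ∫ x : ℝ, Real.exp (-(1/2) * (x - c) ^ 2)
      = ∫ x : ℝ, Real.exp (-(1/2) * x ^ 2) := by
    exact integral_sub_right_eq_self (fun x => Real.exp (-(1/2) * x ^ 2)) c
  rw [h1, integral_gaussian]
  have h2 : Real.sqrt (Real.pi / (1/2)) = Real.sqrt (2 * Real.pi) := by
    norm_num; ring_nf
  rw [h2]
  have h3 : Real.sqrt (2 * Real.pi) ≠ 0 := by positivity
  field_simp

lemma integrable_exp_mul_gaussian (c : ℝ) :
    Integrable (fun x => Real.exp (c * x)) (gaussianReal 0 1) := by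
  rw [gaussianReal_eq]
  rw [integrable_withDensity_iff_integrable_smul ((measurable_gaussianPDFReal 0 1).real_toNNReal)]
  refine (integrable_pdf_mul_exp c).congr (Eventually.of_forall fun x => ?_)
  simp only [NNReal.smul_def, smul_eq_mul]
  rw [Real.coe_toNNReal _ (gaussianPDFReal_nonneg 0 1 x)]

lemma integral_exp_mul_gaussian (c : ℝ) :
    ∫ x, Real.exp (c * x) ∂(gaussianReal 0 1) = Real.exp (c ^ 2 / 2) := by
  rw [gaussianReal_eq]
  rw [integral_withDensity_eq_integral_smul ((measurable_gaussianPDFReal 0 1).real_toNNReal)]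
  rw [← integral_pdf_mul_exp c]
  congr 1 with x
  simp only [NNReal.smul_def, smul_eq_mul]
  rw [Real.coe_toNNReal _ (gaussianPDFReal_nonneg 0 1 x)]



lemma half_double_sum {n : ℕ} (f : Fin n → Fin n → ℝ)
    (hsym : ∀ i j, f i j = f j i) (hdiag : ∀ i, f i i = 0) :
    (1/2 : ℝ) * ∑ i, ∑ j, f i j
      = ∑ p : {p : Fin n × Fin n // p.1 < p.2}, f p.1.1 p.1.2 := by
  classical
  have hprod : ∑ i, ∑ j, f i j
      = ∑ p ∈ Finset.univ ×ˢ (Finset.univ : Finset (Fin n)), f p.1 p.2 := by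
    rw [Finset.sum_product]
  have hsplit := Finset.sum_filter_add_sum_filter_not
    (Finset.univ ×ˢ (Finset.univ : Finset (Fin n))) (fun p => p.1 < p.2)
    (fun p => f p.1 p.2)
  have hsplit2 := Finset.sum_filter_add_sum_filter_not
    ((Finset.univ ×ˢ (Finset.univ : Finset (Fin n))).filter (fun p => ¬ p.1 < p.2))
    (fun p => p.2 < p.1) (fun p => f p.1 p.2)
  have hdiagsum : ∑ p ∈ (((Finset.univ ×ˢ (Finset.univ : Finset (Fin n))).filter
        (fun p => ¬ p.1 < p.2)).filter (fun p => ¬ p.2 < p.1)), f p.1 p.2 = 0 := by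
    refine Finset.sum_eq_zero fun p hp => ?_
    simp only [Finset.mem_filter] at hp
    have : p.1 = p.2 := le_antisymm (not_lt.1 hp.2) (not_lt.1 hp.1.2)
    rw [this]; exact hdiag p.2
  have hswap : ∑ p ∈ (((Finset.univ ×ˢ (Finset.univ : Finset (Fin n))).filter
        (fun p => ¬ p.1 < p.2)).filter (fun p => p.2 < p.1)), f p.1 p.2
      = ∑ p ∈ ((Finset.univ ×ˢ (Finset.univ : Finset (Fin n))).filter
        (fun p => p.1 < p.2)), f p.1 p.2 := by
    refine Finset.sum_nbij' (fun p => Prod.swap p) (fun p => Prod.swap p) ?_ ?_ ?_ ?_ ?_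
    · intro a ha; simp only [Finset.mem_filter] at ha ⊢
      exact ⟨by simp, ha.2⟩
    · intro a ha; simp only [Finset.mem_filter] at ha ⊢
      refine ⟨⟨by simp, not_lt.2 ha.2.le⟩, ha.2⟩
    · intro a _; simp
    · intro a _; simp
    · intro a _; exact hsym _ _
  have hsub : ∑ p : {p : Fin n × Fin n // p.1 < p.2}, f p.1.1 p.1.2
      = ∑ p ∈ ((Finset.univ ×ˢ (Finset.univ : Finset (Fin n))).filter
        (fun p => p.1 < p.2)), f p.1 p.2 :=
    (Finset.sum_subtype (p := fun q : Fin n × Fin n => q.1 < q.2) _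
      (fun q => by simp) (fun q : Fin n × Fin n => f q.1 q.2)).symm
  rw [hsub]
  rw [hprod, ← hsplit, ← hsplit2, hswap, hdiagsum]
  ring



lemma corner_sum_bound {n K : ℕ} (hK : 1 ≤ K) (hnK : 2 * K < n) (t : ℝ) (ht : 0 ≤ t)
    (ψ : ℕ → ℝ) (hψ0 : ∀ i, 0 ≤ ψ i)
    (hψsum : (∑ i ∈ Finset.range n, ψ i) = 1 / 2) :
    ∑ p : {p : Fin n × Fin n // p.1 < p.2},
      (if n - K ≤ (p.1.2 : ℕ) - (p.1.1 : ℕ)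
        then t * ψ (n - ((p.1.2 : ℕ) - (p.1.1 : ℕ))) else 0)
      ≤ t * K / 2 := by
  classical
  set G : Fin n × Fin n → ℝ := fun q =>
    if q.1 < q.2 ∧ n - K ≤ (q.2 : ℕ) - (q.1 : ℕ)
      then t * ψ (n - ((q.2 : ℕ) - (q.1 : ℕ))) else 0 with hG
  have hGnonneg : ∀ q, 0 ≤ G q := by
    intro q; rw [hG]; dsimp only
    split
    · exact mul_nonneg ht (hψ0 _)
    · exact le_refl 0
  -- rewrite subtype sum in terms of G
  have h1 : ∑ p : {p : Fin n × Fin n // p.1 < p.2},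
      (if n - K ≤ (p.1.2 : ℕ) - (p.1.1 : ℕ)
        then t * ψ (n - ((p.1.2 : ℕ) - (p.1.1 : ℕ))) else 0)
      = ∑ p : {p : Fin n × Fin n // p.1 < p.2}, G p.1 := by
    refine Finset.sum_congr rfl fun p _ => ?_
    rw [hG]; dsimp only
    by_cases hc : n - K ≤ (p.1.2 : ℕ) - (p.1.1 : ℕ)
    · rw [if_pos hc, if_pos ⟨p.2, hc⟩]
    · rw [if_neg hc, if_neg (by tauto)]
  have h2 : ∑ p : {p : Fin n × Fin n // p.1 < p.2}, G p.1
      = ∑ q ∈ ((Finset.univ ×ˢ (Finset.univ : Finset (Fin n))).filter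
          (fun q => q.1 < q.2)), G q :=
    (Finset.sum_subtype (p := fun q : Fin n × Fin n => q.1 < q.2) _
      (fun q => by simp) G).symm
  have h3 : ∑ q ∈ ((Finset.univ ×ˢ (Finset.univ : Finset (Fin n))).filter
          (fun q => q.1 < q.2)), G q
      ≤ ∑ q ∈ (Finset.univ ×ˢ (Finset.univ : Finset (Fin n))), G q :=
    Finset.sum_le_sum_of_subset_of_nonneg (Finset.filter_subset _ _)
      (fun q _ _ => hGnonneg q)
  have h4 : ∑ q ∈ (Finset.univ ×ˢ (Finset.univ : Finset (Fin n))), G q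
      = ∑ i : Fin n, ∑ j : Fin n, G (i, j) := Finset.sum_product _ _ _
  -- inner bound
  have hinner : ∀ i : Fin n, ∑ j : Fin n, G (i, j) ≤ t * (1/2) := by
    intro i
    have e1 : ∑ j : Fin n, G (i, j)
        = ∑ j ∈ Finset.univ.filter
            (fun j : Fin n => i < j ∧ n - K ≤ (j : ℕ) - (i : ℕ)),
            t * ψ (n - ((j : ℕ) - (i : ℕ))) := by
      rw [Finset.sum_filter]
    rw [e1]
    have e2 : ∑ j ∈ Finset.univ.filter
            (fun j : Fin n => i < j ∧ n - K ≤ (j : ℕ) - (i : ℕ)),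
            t * ψ (n - ((j : ℕ) - (i : ℕ)))
        = ∑ d ∈ (Finset.univ.filter
            (fun j : Fin n => i < j ∧ n - K ≤ (j : ℕ) - (i : ℕ))).image
            (fun j : Fin n => n - ((j : ℕ) - (i : ℕ))), t * ψ d := by
      rw [Finset.sum_image]
      intro x hx y hy hxy
      simp only [Finset.coe_filter, Finset.mem_filter, Finset.mem_univ, true_and, Set.mem_setOf_eq] at hx hy
      have hx2 := x.isLt
      have hy2 := y.isLt
      have hx1 : (i : ℕ) < (x : ℕ) := hx.1
      have hy1 : (i : ℕ) < (y : ℕ) := hy.1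
      simp only at hxy
      exact Fin.ext (by omega)
    rw [e2]
    have e3 : ∑ d ∈ (Finset.univ.filter
            (fun j : Fin n => i < j ∧ n - K ≤ (j : ℕ) - (i : ℕ))).image
            (fun j : Fin n => n - ((j : ℕ) - (i : ℕ))), t * ψ d
        ≤ ∑ d ∈ Finset.range n, t * ψ d := by
      refine Finset.sum_le_sum_of_subset_of_nonneg ?_
        (fun d _ _ => mul_nonneg ht (hψ0 d))
      intro d hd
      simp only [Finset.mem_image, Finset.mem_filter, Finset.mem_univ, true_and] at hd
      obtain ⟨x, ⟨hx1, hx2⟩, rfl⟩ := hd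
      have := x.isLt
      have : (i:ℕ) < (x:ℕ) := hx1
      simp only [Finset.mem_range]
      omega
    refine e3.trans ?_
    rw [← Finset.mul_sum, hψsum]
  -- outer: terms with K ≤ i vanish
  have houter : ∀ i : Fin n, K ≤ (i : ℕ) → ∑ j : Fin n, G (i, j) = 0 := by
    intro i hi
    refine Finset.sum_eq_zero fun j _ => ?_
    rw [hG]; dsimp only
    rw [if_neg]
    rintro ⟨hj1, hj2⟩
    have : (i:ℕ) < (j:ℕ) := hj1
    have := j.isLt
    omega
  have h5 : ∑ i : Fin n, ∑ j : Fin n, G (i, j)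
      = ∑ i ∈ Finset.univ.filter (fun i : Fin n => (i : ℕ) < K),
          ∑ j : Fin n, G (i, j) := by
    rw [← Finset.sum_filter_add_sum_filter_not Finset.univ
      (fun i : Fin n => (i : ℕ) < K)]
    have : ∑ i ∈ Finset.univ.filter (fun i : Fin n => ¬ (i : ℕ) < K),
        ∑ j : Fin n, G (i, j) = 0 := by
      refine Finset.sum_eq_zero fun i hi => ?_
      simp only [Finset.mem_filter, Finset.mem_univ, true_and, not_lt] at hi
      exact houter i hi
    rw [this, add_zero]
  have hcard : (Finset.univ.filter (fun i : Fin n => (i : ℕ) < K)).card ≤ K := by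
    have := Finset.card_le_card_of_injOn (f := fun i : Fin n => (i : ℕ))
      (s := Finset.univ.filter (fun i : Fin n => (i : ℕ) < K)) (t := Finset.range K) ?_ ?_
    · simpa using this
    · intro i hi
      simp only [Finset.coe_filter, Finset.mem_filter, Finset.mem_univ, true_and, Set.mem_setOf_eq] at hi
      simpa using hi
    · intro x _ y _ hxy; exact Fin.ext hxy
  have h6 : ∑ i ∈ Finset.univ.filter (fun i : Fin n => (i : ℕ) < K),
          ∑ j : Fin n, G (i, j)
      ≤ (Finset.univ.filter (fun i : Fin n => (i : ℕ) < K)).card • (t * (1/2)) :=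
    Finset.sum_le_card_nsmul _ _ _ (fun i _ => hinner i)
  rw [h1, h2]
  refine (h3.trans_eq h4).trans ?_
  rw [h5]
  refine h6.trans ?_
  rw [nsmul_eq_mul]
  have : ((Finset.univ.filter (fun i : Fin n => (i : ℕ) < K)).card : ℝ) ≤ (K : ℝ) := by
    exact_mod_cast hcard
  calc ((Finset.univ.filter (fun i : Fin n => (i : ℕ) < K)).card : ℝ) * (t * (1/2))
      ≤ (K : ℝ) * (t * (1/2)) := by
        exact mul_le_mul_of_nonneg_right this (by positivity)
    _ = t * K / 2 := by ring


end Stmt19Aux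

open Stmt19Aux

set_option maxHeartbeats 1200000 in
/-- banded Toeplitz vs circulant profile. With
`S_ij = ψ(|i-j|)` and its circulant completion `S°_ij = ψ(min(|i-j|, n-|i-j|))`,
and `W = (tS)^{⊙1/2} ⊙ X`, `W̃ = (tS°)^{⊙1/2} ⊙ X` coupled through a common
GOE matrix `X`, the perturbation `E(σ) = ½σᵀ(W̃-W)σ` satisfies
`E E(σ)² ≤ tK` for every spin configuration `σ`, and the free energies satisfy
`0 ≤ F̃_n - F_n ≤ tK/(2n)`. -/
theorem stmt19 (n K : ℕ) (hK : 1 ≤ K) (hnK : 2 * K < n)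
    (t h Cs : ℝ) (ht : 0 < t)
    (ψ : ℕ → ℝ) (hψ0 : ∀ i, 0 ≤ ψ i) (hψb : ∀ i, ψ i ≤ Cs / K)
    (hψsum : (∑ i ∈ Finset.range n, ψ i) = 1 / 2)
    (hψsupp : ∀ i : ℕ, (i = 0 ∨ K < i) → ψ i = 0)
    (Ω : Type*) [MeasurableSpace Ω] (μ : Measure Ω) [IsProbabilityMeasure μ]
    (X : Fin n → Fin n → Ω → ℝ)
    (hXmeas : ∀ i j, Measurable (X i j)) (hXsym : ∀ i j, X i j = X j i)
    (hXindep : iIndepFun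
      (fun p : {p : Fin n × Fin n // p.1 < p.2} => X p.1.1 p.1.2) μ)
    (hXlaw : ∀ i j : Fin n, i < j → Measure.map (X i j) μ = gaussianReal 0 1)
    (W Wt : Fin n → Fin n → Ω → ℝ)
    (hW : ∀ i j ω, W i j ω =
      Real.sqrt (t * ψ (Int.natAbs ((i : ℤ) - (j : ℤ)))) * X i j ω)
    (hWt : ∀ i j ω, Wt i j ω =
      Real.sqrt (t * ψ (min (Int.natAbs ((i : ℤ) - (j : ℤ)))
        (n - Int.natAbs ((i : ℤ) - (j : ℤ))))) * X i j ω)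
    (F Ft : ℝ)
    (hF : F = (1 / (n : ℝ)) * ∫ ω, Real.log (∑ σ : SpinConf'' n,
      Real.exp ((1 / 2) * ∑ i, ∑ j, (σ i : ℝ) * W i j ω * (σ j : ℝ)
        + h * ∑ i, (σ i : ℝ))) ∂μ)
    (hFt : Ft = (1 / (n : ℝ)) * ∫ ω, Real.log (∑ σ : SpinConf'' n,
      Real.exp ((1 / 2) * ∑ i, ∑ j, (σ i : ℝ) * Wt i j ω * (σ j : ℝ)
        + h * ∑ i, (σ i : ℝ))) ∂μ)
    (hint1 : Integrable (fun ω => Real.log (∑ σ : SpinConf'' n,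
      Real.exp ((1 / 2) * ∑ i, ∑ j, (σ i : ℝ) * W i j ω * (σ j : ℝ)
        + h * ∑ i, (σ i : ℝ)))) μ)
    (hint2 : Integrable (fun ω => Real.log (∑ σ : SpinConf'' n,
      Real.exp ((1 / 2) * ∑ i, ∑ j, (σ i : ℝ) * Wt i j ω * (σ j : ℝ)
        + h * ∑ i, (σ i : ℝ)))) μ) :
    (∀ σ : SpinConf'' n,
      (∫ ω, ((1 / 2) * ∑ i, ∑ j, (σ i : ℝ) * (σ j : ℝ) *
        (Wt i j ω - W i j ω)) ^ 2 ∂μ) ≤ t * K) ∧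
    0 ≤ Ft - F ∧ Ft - F ≤ t * K / (2 * n) := by
  classical
  have hn0 : 0 < n := by omega
  haveI : Nonempty (SpinConf'' n) := ⟨fun _ => ⟨1, by simp⟩⟩
  -- spin values square to one
  have hσsq : ∀ (σ : SpinConf'' n) (i : Fin n), ((σ i : ℝ)) ^ 2 = 1 := by
    intro σ i
    have h2 := (σ i).2
    rcases Finset.mem_insert.1 h2 with h2' | h2'
    · rw [h2']; norm_num
    · rw [Finset.mem_singleton.1 h2']; norm_num
  -- the difference-coefficient matrix
  set D : Fin n → Fin n → ℝ := fun i j =>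
    Real.sqrt (t * ψ (min (Int.natAbs ((i : ℤ) - (j : ℤ)))
      (n - Int.natAbs ((i : ℤ) - (j : ℤ)))))
    - Real.sqrt (t * ψ (Int.natAbs ((i : ℤ) - (j : ℤ)))) with hD
  have hWtW : ∀ i j ω, Wt i j ω - W i j ω = D i j * X i j ω := by
    intro i j ω; rw [hWt, hW, hD]; ring
  have hnatAbs : ∀ i j : Fin n, (i : ℕ) < (j : ℕ) →
      Int.natAbs ((i : ℤ) - (j : ℤ)) = (j : ℕ) - (i : ℕ) := by
    intro i j hij; omega
  have hnatAbs_symm : ∀ i j : Fin n,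
      Int.natAbs ((i : ℤ) - (j : ℤ)) = Int.natAbs ((j : ℤ) - (i : ℤ)) := by
    intro i j; omega
  have hDsym : ∀ i j, D i j = D j i := by
    intro i j; rw [hD]; dsimp only; rw [hnatAbs_symm i j]
  have hDdiag : ∀ i, D i i = 0 := by
    intro i; rw [hD]; dsimp only
    simp [hψsupp 0 (Or.inl rfl)]
  have hDsq : ∀ p : {p : Fin n × Fin n // p.1 < p.2},
      (D p.1.1 p.1.2) ^ 2 = if n - K ≤ (p.1.2 : ℕ) - (p.1.1 : ℕ)
        then t * ψ (n - ((p.1.2 : ℕ) - (p.1.1 : ℕ))) else 0 := by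
    intro p
    have hlt : (p.1.1 : ℕ) < (p.1.2 : ℕ) := p.2
    have hub := p.1.2.isLt
    set a : ℕ := (p.1.2 : ℕ) - (p.1.1 : ℕ) with ha
    have hna : Int.natAbs ((p.1.1 : ℤ) - (p.1.2 : ℤ)) = a := by omega
    rw [hD]; dsimp only; rw [hna]
    by_cases h1 : a ≤ K
    · have hmin : min a (n - a) = a := min_eq_left (by omega)
      rw [hmin, if_neg (by omega)]
      simp
    · by_cases h2 : a < n - K
      · have hψa : ψ a = 0 := hψsupp a (Or.inr (by omega))
        have hψm : ψ (min a (n - a)) = 0 := hψsupp _ (Or.inr (by omega))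
        rw [hψa, hψm, if_neg (by omega)]
        simp
      · have hge : n - K ≤ a := by omega
        have hψa : ψ a = 0 := hψsupp a (Or.inr (by omega))
        have hmin : min a (n - a) = n - a := min_eq_right (by omega)
        rw [hmin, hψa, if_pos hge, mul_zero, Real.sqrt_zero, sub_zero,
          Real.sq_sqrt (mul_nonneg ht.le (hψ0 _))]
  -- coefficients of the perturbation
  set c : SpinConf'' n → {p : Fin n × Fin n // p.1 < p.2} → ℝ :=
    fun σ p => (σ p.1.1 : ℝ) * (σ p.1.2 : ℝ) * D p.1.1 p.1.2 with hc
  have hcsq : ∀ σ p, (c σ p) ^ 2 = (D p.1.1 p.1.2) ^ 2 := by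
    intro σ p; rw [hc]; dsimp only
    rw [mul_pow, mul_pow, hσsq, hσsq]; ring
  set v : SpinConf'' n → ℝ :=
    fun σ => ∑ p : {p : Fin n × Fin n // p.1 < p.2}, (c σ p) ^ 2 with hv
  have hvnonneg : ∀ σ, 0 ≤ v σ :=
    fun σ => Finset.sum_nonneg fun p _ => sq_nonneg _
  have hvle : ∀ σ, v σ ≤ t * K / 2 := by
    intro σ
    rw [hv]; dsimp only
    calc ∑ p : {p : Fin n × Fin n // p.1 < p.2}, (c σ p) ^ 2
        = ∑ p : {p : Fin n × Fin n // p.1 < p.2},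
            (if n - K ≤ (p.1.2 : ℕ) - (p.1.1 : ℕ)
              then t * ψ (n - ((p.1.2 : ℕ) - (p.1.1 : ℕ))) else 0) := by
          refine Finset.sum_congr rfl fun p _ => ?_
          rw [hcsq, hDsq]
      _ ≤ t * K / 2 := Stmt19Aux.corner_sum_bound hK hnK t ht.le ψ hψ0 hψsum

  -- Gaussian transfer facts for the independent entries
  have hexpint : ∀ p : {p : Fin n × Fin n // p.1 < p.2}, ∀ u : ℝ,
      Integrable (fun ω => Real.exp (u * X p.1.1 p.1.2 ω)) μ := by
    intro p u
    have hmap := hXlaw p.1.1 p.1.2 p.2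
    have hg : AEStronglyMeasurable (fun x : ℝ => Real.exp (u * x))
        (Measure.map (X p.1.1 p.1.2) μ) :=
      (Real.continuous_exp.comp (continuous_const.mul continuous_id)).aestronglyMeasurable
    have h2 : Integrable (fun x : ℝ => Real.exp (u * x))
        (Measure.map (X p.1.1 p.1.2) μ) := by
      rw [hmap]; exact Stmt19Aux.integrable_exp_mul_gaussian u
    exact (integrable_map_measure hg (hXmeas _ _).aemeasurable).mp h2
  have hmgfX : ∀ p : {p : Fin n × Fin n // p.1 < p.2}, ∀ u : ℝ,
      ∫ ω, Real.exp (u * X p.1.1 p.1.2 ω) ∂μ = Real.exp (u ^ 2 / 2) := by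
    intro p u
    have hmap := hXlaw p.1.1 p.1.2 p.2
    have hg : AEStronglyMeasurable (fun x : ℝ => Real.exp (u * x))
        (Measure.map (X p.1.1 p.1.2) μ) :=
      (Real.continuous_exp.comp (continuous_const.mul continuous_id)).aestronglyMeasurable
    have h2 := integral_map (hXmeas p.1.1 p.1.2).aemeasurable hg
    rw [← h2, hmap, Stmt19Aux.integral_exp_mul_gaussian]
  have hXint : ∀ p : {p : Fin n × Fin n // p.1 < p.2},
      Integrable (fun ω => X p.1.1 p.1.2 ω) μ := by
    intro p
    refine ((hexpint p 1).add (hexpint p (-1))).mono'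
      (hXmeas p.1.1 p.1.2).aestronglyMeasurable ?_
    refine Filter.Eventually.of_forall fun ω => ?_
    have h3 := Stmt19Aux.abs_le_exp_add_exp (X p.1.1 p.1.2 ω)
    simpa [Real.norm_eq_abs, one_mul, neg_mul] using h3
  have hXmean : ∀ p : {p : Fin n × Fin n // p.1 < p.2},
      ∫ ω, X p.1.1 p.1.2 ω ∂μ = 0 := by
    intro p
    have hmap := hXlaw p.1.1 p.1.2 p.2
    have hid : ∫ ω, X p.1.1 p.1.2 ω ∂μ = ∫ x, x ∂(gaussianReal 0 1) := by
      rw [← hmap]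
      exact (integral_map (hXmeas _ _).aemeasurable aestronglyMeasurable_id).symm
    have hnegmap : Measure.map (fun ω => - X p.1.1 p.1.2 ω) μ = gaussianReal 0 1 := by
      have h1 : Measure.map (fun ω => - X p.1.1 p.1.2 ω) μ
          = Measure.map (fun x : ℝ => -x) (Measure.map (X p.1.1 p.1.2) μ) := by
        rw [Measure.map_map measurable_neg (hXmeas _ _)]
        rfl
      rw [h1, hmap]
      have h4 : (fun x : ℝ => -x) = (fun x : ℝ => (-1 : ℝ) * x) := by
        funext x; ring
      rw [h4]
      have h5 := gaussianReal_map_const_mul (μ := 0) (v := 1) (-1 : ℝ)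
      have h6 : (fun x : ℝ => (-1 : ℝ) * x) = ((-1 : ℝ) * ·) := rfl
      rw [h6, h5]
      congr 1
      · norm_num
      · exact Subtype.ext (by norm_num)
    have hneg : ∫ ω, - X p.1.1 p.1.2 ω ∂μ = ∫ x, x ∂(gaussianReal 0 1) := by
      rw [← hnegmap]
      exact (integral_map ((hXmeas p.1.1 p.1.2).neg).aemeasurable
        aestronglyMeasurable_id).symm
    rw [integral_neg] at hneg
    linarith [hid, hneg]
  -- the perturbation as a sum of independent Gaussians
  set Yf : SpinConf'' n → Ω → ℝ := fun σ ω =>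
    ∑ p : {p : Fin n × Fin n // p.1 < p.2}, c σ p * X p.1.1 p.1.2 ω with hYf
  have hYeq : ∀ (σ : SpinConf'' n) (ω : Ω),
      (1 / 2 : ℝ) * ∑ i, ∑ j, (σ i : ℝ) * (σ j : ℝ) * (Wt i j ω - W i j ω)
        = Yf σ ω := by
    intro σ ω
    rw [hYf]; dsimp only
    rw [Stmt19Aux.half_double_sum
      (fun i j => (σ i : ℝ) * (σ j : ℝ) * (Wt i j ω - W i j ω))
      (by
        intro i j
        have hx := congrFun (hXsym i j) ω
        rw [hWtW, hWtW, hDsym i j, hx]; ring)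
      (by intro i; rw [hWtW, hDdiag]; ring)]
    refine Finset.sum_congr rfl fun p _ => ?_
    rw [hWtW, hc]; ring
  have hYmeas : ∀ σ : SpinConf'' n, Measurable (Yf σ) := by
    intro σ
    rw [hYf]; dsimp only
    exact Finset.measurable_sum _ (fun p _ => (hXmeas _ _).const_mul _)
  have hZindep : ∀ σ : SpinConf'' n, iIndepFun
      (fun p : {p : Fin n × Fin n // p.1 < p.2} =>
        fun ω => c σ p * X p.1.1 p.1.2 ω) μ := by
    intro σ
    exact hXindep.comp (fun p x => c σ p * x)
      (fun p => measurable_id.const_mul _)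
  have hZmeas : ∀ (σ : SpinConf'' n) p,
      Measurable (fun ω => c σ p * X p.1.1 p.1.2 ω) :=
    fun σ p => (hXmeas _ _).const_mul _
  have hYfsum : ∀ σ : SpinConf'' n, Yf σ
      = ∑ p ∈ Finset.univ, (fun ω => c σ p * X p.1.1 p.1.2 ω) := by
    intro σ; funext ω
    rw [hYf]; dsimp only
    rw [Finset.sum_apply]
  have hmgfY : ∀ (σ : SpinConf'' n) (u : ℝ),
      mgf (Yf σ) μ u = Real.exp (u ^ 2 * v σ / 2) := by
    intro σ u
    rw [hYfsum σ, iIndepFun.mgf_sum (hZindep σ) (hZmeas σ) Finset.univ]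
    have hterm : ∀ p, mgf (fun ω => c σ p * X p.1.1 p.1.2 ω) μ u
        = Real.exp ((u * c σ p) ^ 2 / 2) := by
      intro p
      rw [mgf]
      calc ∫ ω, Real.exp (u * (c σ p * X p.1.1 p.1.2 ω)) ∂μ
          = ∫ ω, Real.exp ((u * c σ p) * X p.1.1 p.1.2 ω) ∂μ :=
            integral_congr_ae (Filter.Eventually.of_forall fun ω =>
              congrArg Real.exp (mul_assoc u (c σ p) (X p.1.1 p.1.2 ω)).symm)
        _ = Real.exp ((u * c σ p) ^ 2 / 2) := hmgfX p _
    rw [Finset.prod_congr rfl fun p _ => hterm p, ← Real.exp_sum]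
    congr 1
    calc ∑ p : {p : Fin n × Fin n // p.1 < p.2}, (u * c σ p) ^ 2 / 2
        = ∑ p : {p : Fin n × Fin n // p.1 < p.2}, u ^ 2 / 2 * (c σ p) ^ 2 :=
          Finset.sum_congr rfl fun p _ => by ring
      _ = u ^ 2 / 2 * ∑ p : {p : Fin n × Fin n // p.1 < p.2}, (c σ p) ^ 2 :=
          (Finset.mul_sum _ _ _).symm
      _ = u ^ 2 * v σ / 2 := by rw [hv]; ring
  have hexpYint : ∀ (σ : SpinConf'' n) (u : ℝ),
      Integrable (fun ω => Real.exp (u * Yf σ ω)) μ := by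
    intro σ u
    have hZint : ∀ p ∈ (Finset.univ : Finset {p : Fin n × Fin n // p.1 < p.2}),
        Integrable (fun ω => Real.exp (u * (c σ p * X p.1.1 p.1.2 ω))) μ := by
      intro p _
      exact (hexpint p (u * c σ p)).congr
        (Filter.Eventually.of_forall fun ω =>
          congrArg Real.exp (mul_assoc u (c σ p) (X p.1.1 p.1.2 ω)))
    have h7 := iIndepFun.integrable_exp_mul_sum (hZindep σ) (hZmeas σ) hZint
    rw [hYfsum σ]
    exact h7
  -- second-moment bound via the mgf
  have hRint : ∀ (σ : SpinConf'' n) (s : ℝ), Integrable (fun ω =>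
      Real.exp (s * Yf σ ω) + Real.exp (-s * Yf σ ω) - 2) μ :=
    fun σ s => ((hexpYint σ s).add (hexpYint σ (-s))).sub (integrable_const 2)
  have hptw : ∀ (σ : SpinConf'' n) (s : ℝ) (ω : Ω),
      (s * Yf σ ω) ^ 2 ≤ Real.exp (s * Yf σ ω) + Real.exp (-s * Yf σ ω) - 2 := by
    intro σ s ω
    have h8 := Stmt19Aux.sq_le_exp_add_exp (s * Yf σ ω)
    rwa [← neg_mul] at h8
  have hYsqint : ∀ σ : SpinConf'' n, Integrable (fun ω => (Yf σ ω) ^ 2) μ := by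
    intro σ
    have hsqint : Integrable (fun ω => ((1:ℝ) * Yf σ ω) ^ 2) μ := by
      refine (hRint σ 1).mono'
        (((hYmeas σ).const_mul 1).pow_const 2).aestronglyMeasurable ?_
      exact Filter.Eventually.of_forall fun ω => by
        rw [Real.norm_eq_abs, abs_of_nonneg (sq_nonneg _)]; exact hptw σ 1 ω
    exact hsqint.congr (Filter.Eventually.of_forall fun ω =>
      congrArg (fun z : ℝ => z ^ 2) (one_mul (Yf σ ω)))
  have hkey : ∀ (σ : SpinConf'' n) (s : ℝ),
      s ^ 2 * ∫ ω, (Yf σ ω) ^ 2 ∂μ ≤ 2 * Real.exp (s ^ 2 * v σ / 2) - 2 := by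
    intro σ s
    have hsqint : Integrable (fun ω => (s * Yf σ ω) ^ 2) μ :=
      ((hYsqint σ).const_mul (s ^ 2)).congr
        (Filter.Eventually.of_forall fun ω => (mul_pow s (Yf σ ω) 2).symm)
    have hmono := integral_mono hsqint (hRint σ s) (hptw σ s)
    have hL : ∫ ω, (s * Yf σ ω) ^ 2 ∂μ = s ^ 2 * ∫ ω, (Yf σ ω) ^ 2 ∂μ := by
      rw [← integral_const_mul]
      exact integral_congr_ae (Filter.Eventually.of_forall fun ω =>
        mul_pow s (Yf σ ω) 2)
    have hR : ∫ ω, (Real.exp (s * Yf σ ω) + Real.exp (-s * Yf σ ω) - 2) ∂μ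
        = 2 * Real.exp (s ^ 2 * v σ / 2) - 2 := by
      have hfint : Integrable (fun ω => Real.exp (s * Yf σ ω)
          + Real.exp (-s * Yf σ ω)) μ := (hexpYint σ s).add (hexpYint σ (-s))
      rw [integral_sub hfint (integrable_const 2),
        integral_add (hexpYint σ s) (hexpYint σ (-s)), integral_const]
      have e1 : ∫ ω, Real.exp (s * Yf σ ω) ∂μ = Real.exp (s ^ 2 * v σ / 2) := by
        have h10 := hmgfY σ s
        rw [mgf] at h10
        exact h10
      have e2 : ∫ ω, Real.exp (-s * Yf σ ω) ∂μ = Real.exp (s ^ 2 * v σ / 2) := by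
        have h10 := hmgfY σ (-s)
        rw [mgf] at h10
        rw [h10, neg_pow]
        norm_num
      rw [e1, e2]
      simp [measure_univ]
      ring
    rw [hL, hR] at hmono
    exact hmono
  have hexphalf : Real.exp ((1:ℝ)/2) < 2 := by
    have h1 := Real.exp_one_lt_d9
    have h2 : Real.exp ((1:ℝ)/2) * Real.exp ((1:ℝ)/2) = Real.exp 1 := by
      rw [← Real.exp_add]; norm_num
    nlinarith [Real.exp_pos ((1:ℝ)/2)]
  have hpart1core : ∀ σ : SpinConf'' n, ∫ ω, (Yf σ ω) ^ 2 ∂μ ≤ 2 * v σ := by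
    intro σ
    rcases (hvnonneg σ).eq_or_lt with hv0 | hvpos
    · have h11 := hkey σ 1
      rw [← hv0] at h11 ⊢
      simp at h11
      linarith
    · set s : ℝ := (Real.sqrt (v σ))⁻¹ with hs
      have hsqrtpos : 0 < Real.sqrt (v σ) := Real.sqrt_pos.2 hvpos
      have hs2 : s ^ 2 = (v σ)⁻¹ := by
        rw [hs, inv_pow, Real.sq_sqrt (hvnonneg σ)]
      have hkey2 := hkey σ s
      rw [hs2] at hkey2
      have hexp9 : (v σ)⁻¹ * v σ / 2 = 1/2 := by field_simp
      rw [hexp9] at hkey2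
      have h3 : (v σ)⁻¹ * ∫ ω, (Yf σ ω) ^ 2 ∂μ ≤ 2 := by linarith
      calc ∫ ω, (Yf σ ω) ^ 2 ∂μ
          = v σ * ((v σ)⁻¹ * ∫ ω, (Yf σ ω) ^ 2 ∂μ) := by
            field_simp
        _ ≤ v σ * 2 := mul_le_mul_of_nonneg_left h3 (hvnonneg σ)
        _ = 2 * v σ := by ring
  have hpart1 : ∀ σ : SpinConf'' n,
      (∫ ω, ((1 / 2 : ℝ) * ∑ i, ∑ j, (σ i : ℝ) * (σ j : ℝ) *
        (Wt i j ω - W i j ω)) ^ 2 ∂μ) ≤ t * K := by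
    intro σ
    have hcongr : (∫ ω, ((1 / 2 : ℝ) * ∑ i, ∑ j, (σ i : ℝ) * (σ j : ℝ) *
        (Wt i j ω - W i j ω)) ^ 2 ∂μ) = ∫ ω, (Yf σ ω) ^ 2 ∂μ :=
      integral_congr_ae (Filter.Eventually.of_forall fun ω =>
        congrArg (fun z : ℝ => z ^ 2) (hYeq σ ω))
    rw [hcongr]
    have h12 := hpart1core σ
    have h13 := hvle σ
    linarith
  -- ============ free energy part ============
  set HamH : SpinConf'' n → Ω → ℝ := fun σ ω =>
    (1 / 2 : ℝ) * ∑ i, ∑ j, (σ i : ℝ) * W i j ω * (σ j : ℝ)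
      + h * ∑ i, (σ i : ℝ) with hHamH
  set Zf : Ω → ℝ := fun ω => ∑ σ : SpinConf'' n, Real.exp (HamH σ ω) with hZf
  set Ztf : Ω → ℝ := fun ω => ∑ σ : SpinConf'' n, Real.exp
    ((1 / 2 : ℝ) * ∑ i, ∑ j, (σ i : ℝ) * Wt i j ω * (σ j : ℝ)
      + h * ∑ i, (σ i : ℝ)) with hZtf
  have hint1' : Integrable (fun ω => Real.log (Zf ω)) μ := by
    refine hint1.congr (Filter.Eventually.of_forall fun ω => ?_)
    rw [hZf, hHamH]
  have hint2' : Integrable (fun ω => Real.log (Ztf ω)) μ := by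
    refine hint2.congr (Filter.Eventually.of_forall fun ω => ?_)
    rw [hZtf]
  have hiZ : (∫ ω, Real.log (∑ σ : SpinConf'' n,
      Real.exp ((1 / 2) * ∑ i, ∑ j, (σ i : ℝ) * W i j ω * (σ j : ℝ)
        + h * ∑ i, (σ i : ℝ))) ∂μ) = ∫ ω, Real.log (Zf ω) ∂μ :=
    integral_congr_ae (Filter.Eventually.of_forall fun ω => by rw [hZf, hHamH])
  have hiZt : (∫ ω, Real.log (∑ σ : SpinConf'' n,
      Real.exp ((1 / 2) * ∑ i, ∑ j, (σ i : ℝ) * Wt i j ω * (σ j : ℝ)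
        + h * ∑ i, (σ i : ℝ))) ∂μ) = ∫ ω, Real.log (Ztf ω) ∂μ :=
    integral_congr_ae (Filter.Eventually.of_forall fun ω => by rw [hZtf])
  -- measurability
  have hWmeas : ∀ i j, Measurable (W i j) := by
    intro i j
    have hWe : W i j = fun ω =>
        Real.sqrt (t * ψ (Int.natAbs ((i : ℤ) - (j : ℤ)))) * X i j ω :=
      funext (hW i j)
    rw [hWe]
    exact (hXmeas i j).const_mul _
  have hHmeas : ∀ σ : SpinConf'' n, Measurable (HamH σ) := by
    intro σ
    have hHe : HamH σ = fun ω => (1 / 2 : ℝ) * ∑ i, ∑ j,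
        (σ i : ℝ) * W i j ω * (σ j : ℝ) + h * ∑ i, (σ i : ℝ) := by rw [hHamH]
    rw [hHe]
    exact ((Finset.measurable_sum Finset.univ (fun i _ =>
      Finset.measurable_sum Finset.univ (fun j _ =>
        ((hWmeas i j).const_mul _).mul_const _))).const_mul _).add_const _
  have hZfmeas : Measurable Zf := by
    have hZe : Zf = fun ω => ∑ σ : SpinConf'' n, Real.exp (HamH σ ω) := by rw [hZf]
    rw [hZe]
    exact Finset.measurable_sum Finset.univ
      (fun σ _ => Real.measurable_exp.comp (hHmeas σ))
  -- positivity
  have hZfpos : ∀ ω, 0 < Zf ω := by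
    intro ω
    have hZe : Zf ω = ∑ σ : SpinConf'' n, Real.exp (HamH σ ω) := by rw [hZf]
    rw [hZe]
    exact Finset.sum_pos (fun σ _ => Real.exp_pos _) Finset.univ_nonempty
  have hZtfpos : ∀ ω, 0 < Ztf ω := by
    intro ω
    have hZe : Ztf ω = ∑ σ : SpinConf'' n, Real.exp
        ((1 / 2 : ℝ) * ∑ i, ∑ j, (σ i : ℝ) * Wt i j ω * (σ j : ℝ)
          + h * ∑ i, (σ i : ℝ)) := by rw [hZtf]
    rw [hZe]
    exact Finset.sum_pos (fun σ _ => Real.exp_pos _) Finset.univ_nonempty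
  -- Gibbs weights
  set pg : SpinConf'' n → Ω → ℝ := fun σ ω => Real.exp (HamH σ ω) / Zf ω with hpg
  have hpgnonneg : ∀ σ ω, 0 ≤ pg σ ω := by
    intro σ ω
    have : pg σ ω = Real.exp (HamH σ ω) / Zf ω := by rw [hpg]
    rw [this]
    exact div_nonneg (Real.exp_pos _).le (hZfpos ω).le
  have hpgle : ∀ σ ω, pg σ ω ≤ 1 := by
    intro σ ω
    have he : pg σ ω = Real.exp (HamH σ ω) / Zf ω := by rw [hpg]
    rw [he, div_le_one (hZfpos ω)]
    have hZe : Zf ω = ∑ τ : SpinConf'' n, Real.exp (HamH τ ω) := by rw [hZf]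
    rw [hZe]
    exact Finset.single_le_sum (fun τ _ => (Real.exp_pos (HamH τ ω)).le)
      (Finset.mem_univ σ)
  have hpgsum : ∀ ω, ∑ σ : SpinConf'' n, pg σ ω = 1 := by
    intro ω
    have he : ∀ σ : SpinConf'' n, pg σ ω = Real.exp (HamH σ ω) / Zf ω :=
      fun σ => by rw [hpg]
    rw [Finset.sum_congr rfl fun σ _ => he σ, ← Finset.sum_div]
    have hZe : Zf ω = ∑ τ : SpinConf'' n, Real.exp (HamH τ ω) := by rw [hZf]
    rw [← hZe]
    exact div_self (hZfpos ω).ne'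
  have hpgmeas : ∀ σ, Measurable (pg σ) := by
    intro σ
    have he : pg σ = fun ω => Real.exp (HamH σ ω) / Zf ω := by rw [hpg]
    rw [he]
    exact (Real.measurable_exp.comp (hHmeas σ)).div hZfmeas
  have hpgint : ∀ σ, Integrable (pg σ) μ := by
    intro σ
    refine (integrable_const (1 : ℝ)).mono' (hpgmeas σ).aestronglyMeasurable ?_
    exact Filter.Eventually.of_forall fun ω => by
      rw [Real.norm_eq_abs, abs_of_nonneg (hpgnonneg σ ω)]; exact hpgle σ ω
  -- Hamiltonian decomposition
  have hHamWt : ∀ (σ : SpinConf'' n) (ω : Ω),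
      (1 / 2 : ℝ) * ∑ i, ∑ j, (σ i : ℝ) * Wt i j ω * (σ j : ℝ)
        + h * ∑ i, (σ i : ℝ) = HamH σ ω + Yf σ ω := by
    intro σ ω
    have hHe : HamH σ ω = (1 / 2 : ℝ) * ∑ i, ∑ j,
        (σ i : ℝ) * W i j ω * (σ j : ℝ) + h * ∑ i, (σ i : ℝ) := by rw [hHamH]
    rw [hHe, ← hYeq σ ω]
    have h1 : ∑ i, ∑ j, (σ i : ℝ) * Wt i j ω * (σ j : ℝ)
        = ∑ i, ∑ j, ((σ i : ℝ) * W i j ω * (σ j : ℝ)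
          + (σ i : ℝ) * (σ j : ℝ) * (Wt i j ω - W i j ω)) :=
      Finset.sum_congr rfl fun i _ => Finset.sum_congr rfl fun j _ => by ring
    have h2 : ∑ i, ∑ j, ((σ i : ℝ) * W i j ω * (σ j : ℝ)
          + (σ i : ℝ) * (σ j : ℝ) * (Wt i j ω - W i j ω))
        = (∑ i, ∑ j, (σ i : ℝ) * W i j ω * (σ j : ℝ))
          + ∑ i, ∑ j, (σ i : ℝ) * (σ j : ℝ) * (Wt i j ω - W i j ω) := by
      rw [← Finset.sum_add_distrib]
      exact Finset.sum_congr rfl fun i _ => Finset.sum_add_distrib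
    rw [h1, h2]
    ring
  have hZtf_eq : ∀ ω, Ztf ω
      = ∑ σ : SpinConf'' n, Real.exp (HamH σ ω) * Real.exp (Yf σ ω) := by
    intro ω
    have hZe : Ztf ω = ∑ σ : SpinConf'' n, Real.exp
        ((1 / 2 : ℝ) * ∑ i, ∑ j, (σ i : ℝ) * Wt i j ω * (σ j : ℝ)
          + h * ∑ i, (σ i : ℝ)) := by rw [hZtf]
    rw [hZe]
    exact Finset.sum_congr rfl fun σ _ => by rw [hHamWt σ ω, Real.exp_add]
  set Qf : Ω → ℝ := fun ω =>
    ∑ σ : SpinConf'' n, pg σ ω * Real.exp (Yf σ ω) with hQf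
  have hQf_eq : ∀ ω, Qf ω = Ztf ω / Zf ω := by
    intro ω
    have hQe : Qf ω = ∑ σ : SpinConf'' n, pg σ ω * Real.exp (Yf σ ω) := by rw [hQf]
    have hpe : ∀ σ : SpinConf'' n, pg σ ω * Real.exp (Yf σ ω)
        = Real.exp (HamH σ ω) * Real.exp (Yf σ ω) / Zf ω := by
      intro σ
      have he : pg σ ω = Real.exp (HamH σ ω) / Zf ω := by rw [hpg]
      rw [he]; ring
    rw [hQe, Finset.sum_congr rfl fun σ _ => hpe σ, ← Finset.sum_div, ← hZtf_eq ω]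
  have hQpos : ∀ ω, 0 < Qf ω := by
    intro ω
    rw [hQf_eq ω]
    exact div_pos (hZtfpos ω) (hZfpos ω)
  have hlogQ : ∀ ω, Real.log (Ztf ω) - Real.log (Zf ω) = Real.log (Qf ω) := by
    intro ω
    rw [hQf_eq ω, Real.log_div (hZtfpos ω).ne' (hZfpos ω).ne']
  -- independence of Gibbs weights and the perturbation
  set S : Finset {p : Fin n × Fin n // p.1 < p.2} :=
    Finset.univ.filter (fun q => (q.1.2 : ℕ) - (q.1.1 : ℕ) ≤ K) with hS
  set P : Finset {p : Fin n × Fin n // p.1 < p.2} :=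
    Finset.univ.filter (fun q => n - K ≤ (q.1.2 : ℕ) - (q.1.1 : ℕ)) with hP
  have hSP : Disjoint S P := by
    rw [hS, hP, Finset.disjoint_left]
    intro q hq1 hq2
    simp only [Finset.mem_filter, Finset.mem_univ, true_and] at hq1 hq2
    omega
  have hbase := hXindep.indepFun_finset S P hSP (fun p => hXmeas p.1.1 p.1.2)
  have hAzero : ∀ q : {p : Fin n × Fin n // p.1 < p.2}, q ∉ S →
      Real.sqrt (t * ψ (Int.natAbs ((q.1.1 : ℤ) - (q.1.2 : ℤ)))) = 0 := by
    intro q hq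
    rw [hS] at hq
    simp only [Finset.mem_filter, Finset.mem_univ, true_and, not_le] at hq
    have hlt : (q.1.1 : ℕ) < (q.1.2 : ℕ) := q.2
    have hna : Int.natAbs ((q.1.1 : ℤ) - (q.1.2 : ℤ))
        = (q.1.2 : ℕ) - (q.1.1 : ℕ) := by omega
    rw [hna, hψsupp _ (Or.inr hq), mul_zero, Real.sqrt_zero]
  have hczero : ∀ (σ : SpinConf'' n) (q : {p : Fin n × Fin n // p.1 < p.2}),
      q ∉ P → c σ q = 0 := by
    intro σ q hq
    rw [hP] at hq
    simp only [Finset.mem_filter, Finset.mem_univ, true_and, not_le] at hq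
    have hD0 : D q.1.1 q.1.2 = 0 := by
      have h14 := hDsq q
      rw [if_neg (by omega)] at h14
      exact (pow_eq_zero_iff (by norm_num : (2:ℕ) ≠ 0)).mp h14
    have hce : c σ q = (σ q.1.1 : ℝ) * (σ q.1.2 : ℝ) * D q.1.1 q.1.2 := by rw [hc]
    rw [hce, hD0, mul_zero]
  -- the Hamiltonian depends only on the S-coordinates
  have hHamS : ∀ (σ : SpinConf'' n) (ω : Ω),
      HamH σ ω = (∑ q ∈ S, (σ q.1.1 : ℝ) * (σ q.1.2 : ℝ) *
        Real.sqrt (t * ψ (Int.natAbs ((q.1.1 : ℤ) - (q.1.2 : ℤ))))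
          * X q.1.1 q.1.2 ω) + h * ∑ i, (σ i : ℝ) := by
    intro σ ω
    have hHe : HamH σ ω = (1 / 2 : ℝ) * ∑ i, ∑ j,
        (σ i : ℝ) * W i j ω * (σ j : ℝ) + h * ∑ i, (σ i : ℝ) := by rw [hHamH]
    rw [hHe]
    congr 1
    rw [Stmt19Aux.half_double_sum (fun i j => (σ i : ℝ) * W i j ω * (σ j : ℝ))
      (by
        intro i j
        rw [hW i j, hW j i, hnatAbs_symm i j, congrFun (hXsym i j) ω]
        ring)
      (by
        intro i
        rw [hW i i]
        simp [hψsupp 0 (Or.inl rfl)])]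
    rw [show (∑ p : {p : Fin n × Fin n // p.1 < p.2},
        (σ p.1.1 : ℝ) * W p.1.1 p.1.2 ω * (σ p.1.2 : ℝ))
      = ∑ p : {p : Fin n × Fin n // p.1 < p.2},
        (σ p.1.1 : ℝ) * (σ p.1.2 : ℝ) *
          Real.sqrt (t * ψ (Int.natAbs ((p.1.1 : ℤ) - (p.1.2 : ℤ))))
            * X p.1.1 p.1.2 ω from
      Finset.sum_congr rfl fun p _ => by rw [hW]; ring]
    exact (Finset.sum_subset (Finset.subset_univ S) (fun q _ hq => by
      rw [hAzero q hq]; ring)).symm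
  -- the perturbation depends only on the P-coordinates
  have hYfP : ∀ (σ : SpinConf'' n) (ω : Ω),
      Yf σ ω = ∑ q ∈ P, c σ q * X q.1.1 q.1.2 ω := by
    intro σ ω
    have hYe : Yf σ ω = ∑ p : {p : Fin n × Fin n // p.1 < p.2},
        c σ p * X p.1.1 p.1.2 ω := by rw [hYf]
    rw [hYe]
    exact (Finset.sum_subset (Finset.subset_univ P) (fun q _ hq => by
      rw [hczero σ q hq, zero_mul])).symm
  -- composition structure
  have hpg_comp : ∀ σ : SpinConf'' n, pg σ =
      (fun x : {q // q ∈ S} → ℝ =>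
        Real.exp ((∑ q : {q // q ∈ S}, (σ q.1.1.1 : ℝ) * (σ q.1.1.2 : ℝ) *
          Real.sqrt (t * ψ (Int.natAbs ((q.1.1.1 : ℤ) - (q.1.1.2 : ℤ)))) * x q)
          + h * ∑ i, (σ i : ℝ))
        / ∑ τ : SpinConf'' n,
          Real.exp ((∑ q : {q // q ∈ S}, (τ q.1.1.1 : ℝ) * (τ q.1.1.2 : ℝ) *
            Real.sqrt (t * ψ (Int.natAbs ((q.1.1.1 : ℤ) - (q.1.1.2 : ℤ)))) * x q)
            + h * ∑ i, (τ i : ℝ)))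
      ∘ (fun ω (q : {q // q ∈ S}) => X q.1.1.1 q.1.1.2 ω) := by
    intro σ
    funext ω
    have he : pg σ ω = Real.exp (HamH σ ω) / Zf ω := by rw [hpg]
    have hZe : Zf ω = ∑ τ : SpinConf'' n, Real.exp (HamH τ ω) := by rw [hZf]
    have hnum : ∀ τ : SpinConf'' n, HamH τ ω
        = (∑ q : {q // q ∈ S}, (τ q.1.1.1 : ℝ) * (τ q.1.1.2 : ℝ) *
            Real.sqrt (t * ψ (Int.natAbs ((q.1.1.1 : ℤ) - (q.1.1.2 : ℤ))))
              * X q.1.1.1 q.1.1.2 ω)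
          + h * ∑ i, (τ i : ℝ) := by
      intro τ
      rw [hHamS τ ω]
      exact congrArg (· + h * ∑ i, (τ i : ℝ)) (Finset.sum_coe_sort S _).symm
    have e1 : Real.exp (HamH σ ω) = Real.exp
        ((∑ q : {q // q ∈ S}, (σ q.1.1.1 : ℝ) * (σ q.1.1.2 : ℝ) *
            Real.sqrt (t * ψ (Int.natAbs ((q.1.1.1 : ℤ) - (q.1.1.2 : ℤ))))
              * X q.1.1.1 q.1.1.2 ω)
          + h * ∑ i, (σ i : ℝ)) := congrArg Real.exp (hnum σ)
    have e2 : (∑ τ : SpinConf'' n, Real.exp (HamH τ ω))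
        = ∑ τ : SpinConf'' n, Real.exp
          ((∑ q : {q // q ∈ S}, (τ q.1.1.1 : ℝ) * (τ q.1.1.2 : ℝ) *
              Real.sqrt (t * ψ (Int.natAbs ((q.1.1.1 : ℤ) - (q.1.1.2 : ℤ))))
                * X q.1.1.1 q.1.1.2 ω)
            + h * ∑ i, (τ i : ℝ)) :=
      Finset.sum_congr rfl fun τ _ => congrArg Real.exp (hnum τ)
    rw [he, hZe, e1, e2]
    rfl
  have hYf_comp : ∀ σ : SpinConf'' n, Yf σ =
      (fun x : {q // q ∈ P} → ℝ => ∑ q : {q // q ∈ P}, c σ q.1 * x q)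
      ∘ (fun ω (q : {q // q ∈ P}) => X q.1.1.1 q.1.1.2 ω) := by
    intro σ
    funext ω
    simp only [Function.comp_apply]
    rw [hYfP σ ω, ← Finset.sum_coe_sort P]
  have hΦmeas : ∀ σ : SpinConf'' n, Measurable (fun x : {q // q ∈ S} → ℝ =>
      Real.exp ((∑ q : {q // q ∈ S}, (σ q.1.1.1 : ℝ) * (σ q.1.1.2 : ℝ) *
        Real.sqrt (t * ψ (Int.natAbs ((q.1.1.1 : ℤ) - (q.1.1.2 : ℤ)))) * x q)
        + h * ∑ i, (σ i : ℝ))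
      / ∑ τ : SpinConf'' n,
        Real.exp ((∑ q : {q // q ∈ S}, (τ q.1.1.1 : ℝ) * (τ q.1.1.2 : ℝ) *
          Real.sqrt (t * ψ (Int.natAbs ((q.1.1.1 : ℤ) - (q.1.1.2 : ℤ)))) * x q)
          + h * ∑ i, (τ i : ℝ))) := by
    have hcomp : ∀ τ : SpinConf'' n, Measurable (fun x : {q // q ∈ S} → ℝ =>
        Real.exp ((∑ q : {q // q ∈ S}, (τ q.1.1.1 : ℝ) * (τ q.1.1.2 : ℝ) *
          Real.sqrt (t * ψ (Int.natAbs ((q.1.1.1 : ℤ) - (q.1.1.2 : ℤ)))) * x q)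
          + h * ∑ i, (τ i : ℝ))) := by
      intro τ
      refine Real.measurable_exp.comp ?_
      refine Measurable.add_const ?_ _
      exact Finset.measurable_sum Finset.univ (fun q _ =>
        (measurable_pi_apply q).const_mul _)
    intro σ
    exact (hcomp σ).div (Finset.measurable_sum Finset.univ fun τ _ => hcomp τ)
  have hΨmeas : ∀ σ : SpinConf'' n, Measurable
      (fun x : {q // q ∈ P} → ℝ => ∑ q : {q // q ∈ P}, c σ q.1 * x q) :=
    fun σ => Finset.measurable_sum Finset.univ (fun q _ =>
      (measurable_pi_apply q).const_mul _)
  have hIndepY : ∀ σ : SpinConf'' n, IndepFun (pg σ) (Yf σ) μ := by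
    intro σ
    have h15 := hbase.comp (hΦmeas σ) (hΨmeas σ)
    rwa [← hpg_comp σ, ← hYf_comp σ] at h15
  have hIndepExpY : ∀ σ : SpinConf'' n,
      IndepFun (pg σ) (fun ω => Real.exp (Yf σ ω)) μ := by
    intro σ
    have h15 := hbase.comp (hΦmeas σ) (Real.measurable_exp.comp (hΨmeas σ))
    have he : (Real.exp ∘ (fun x : {q // q ∈ P} → ℝ =>
        ∑ q : {q // q ∈ P}, c σ q.1 * x q))
        ∘ (fun ω (q : {q // q ∈ P}) => X q.1.1.1 q.1.1.2 ω)
        = fun ω => Real.exp (Yf σ ω) := by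
      funext ω
      simp only [Function.comp_apply]
      congr 1
      rw [hYfP σ ω, ← Finset.sum_coe_sort P]
    rwa [← hpg_comp σ, he] at h15
  -- integrability of the perturbation
  have hYint : ∀ σ : SpinConf'' n, Integrable (Yf σ) μ := by
    intro σ
    have hYe : Yf σ = fun ω => ∑ p : {p : Fin n × Fin n // p.1 < p.2},
        c σ p * X p.1.1 p.1.2 ω := by rw [hYf]
    rw [hYe]
    exact integrable_finset_sum _ (fun p _ => (hXint p).const_mul _)
  have hYmean : ∀ σ : SpinConf'' n, ∫ ω, Yf σ ω ∂μ = 0 := by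
    intro σ
    have hYe : Yf σ = fun ω => ∑ p : {p : Fin n × Fin n // p.1 < p.2},
        c σ p * X p.1.1 p.1.2 ω := by rw [hYf]
    rw [hYe]
    rw [integral_finset_sum _ (fun p _ => (hXint p).const_mul _)]
    refine Finset.sum_eq_zero fun p _ => ?_
    rw [integral_const_mul, hXmean p, mul_zero]
  have hexpY1int : ∀ σ : SpinConf'' n,
      Integrable (fun ω => Real.exp (Yf σ ω)) μ := by
    intro σ
    exact (hexpYint σ 1).congr (Filter.Eventually.of_forall fun ω =>
      congrArg Real.exp (one_mul (Yf σ ω)))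
  have hpgYint : ∀ σ : SpinConf'' n,
      Integrable (fun ω => pg σ ω * Yf σ ω) μ := by
    intro σ
    refine (hYint σ).bdd_mul (c := 1) (hpgmeas σ).aestronglyMeasurable (Filter.Eventually.of_forall fun ω => ?_)
    rw [Real.norm_eq_abs, abs_of_nonneg (hpgnonneg σ ω)]
    exact hpgle σ ω
  have hpgexpYint : ∀ σ : SpinConf'' n,
      Integrable (fun ω => pg σ ω * Real.exp (Yf σ ω)) μ := by
    intro σ
    refine (hexpY1int σ).bdd_mul (c := 1) (hpgmeas σ).aestronglyMeasurable (Filter.Eventually.of_forall fun ω => ?_)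
    rw [Real.norm_eq_abs, abs_of_nonneg (hpgnonneg σ ω)]
    exact hpgle σ ω
  have hQint : Integrable Qf μ := by
    have hQe : Qf = fun ω => ∑ σ : SpinConf'' n, pg σ ω * Real.exp (Yf σ ω) := by
      rw [hQf]
    rw [hQe]
    exact integrable_finset_sum _ (fun σ _ => hpgexpYint σ)
  -- independence consequences
  have hpgY0 : ∀ σ : SpinConf'' n, ∫ ω, pg σ ω * Yf σ ω ∂μ = 0 := by
    intro σ
    calc ∫ ω, pg σ ω * Yf σ ω ∂μ
        = (∫ ω, pg σ ω ∂μ) * ∫ ω, Yf σ ω ∂μ :=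
          (hIndepY σ).integral_mul_eq_mul_integral (hpgint σ).1 (hYint σ).1
      _ = 0 := by rw [hYmean σ, mul_zero]
  have hmgf1 : ∀ σ : SpinConf'' n,
      ∫ ω, Real.exp (Yf σ ω) ∂μ = Real.exp (v σ / 2) := by
    intro σ
    have h10 := hmgfY σ 1
    rw [mgf] at h10
    calc ∫ ω, Real.exp (Yf σ ω) ∂μ
        = ∫ ω, Real.exp (1 * Yf σ ω) ∂μ :=
          integral_congr_ae (Filter.Eventually.of_forall fun ω =>
            congrArg Real.exp (one_mul (Yf σ ω)).symm)
      _ = Real.exp (1 ^ 2 * v σ / 2) := h10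
      _ = Real.exp (v σ / 2) := by norm_num
  have hpgExpVal : ∀ σ : SpinConf'' n, ∫ ω, pg σ ω * Real.exp (Yf σ ω) ∂μ
      = (∫ ω, pg σ ω ∂μ) * Real.exp (v σ / 2) := by
    intro σ
    calc ∫ ω, pg σ ω * Real.exp (Yf σ ω) ∂μ
        = (∫ ω, pg σ ω ∂μ) * ∫ ω, Real.exp (Yf σ ω) ∂μ :=
          (hIndepExpY σ).integral_mul_eq_mul_integral (hpgint σ).1 (hexpY1int σ).1
      _ = (∫ ω, pg σ ω ∂μ) * Real.exp (v σ / 2) := by rw [hmgf1 σ]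
  have hpgsum_int : ∑ σ : SpinConf'' n, ∫ ω, pg σ ω ∂μ = 1 := by
    rw [← integral_finset_sum _ (fun σ _ => hpgint σ)]
    calc ∫ ω, ∑ σ : SpinConf'' n, pg σ ω ∂μ
        = ∫ ω, (1 : ℝ) ∂μ :=
          integral_congr_ae (Filter.Eventually.of_forall fun ω => hpgsum ω)
      _ = 1 := by simp
  have hpgint_nonneg : ∀ σ : SpinConf'' n, 0 ≤ ∫ ω, pg σ ω ∂μ :=
    fun σ => integral_nonneg (fun ω => hpgnonneg σ ω)
  have hQval : ∫ ω, Qf ω ∂μ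
      = ∑ σ : SpinConf'' n, (∫ ω, pg σ ω ∂μ) * Real.exp (v σ / 2) := by
    have hQe : Qf = fun ω => ∑ σ : SpinConf'' n, pg σ ω * Real.exp (Yf σ ω) := by
      rw [hQf]
    rw [hQe, integral_finset_sum _ (fun σ _ => hpgexpYint σ)]
    exact Finset.sum_congr rfl fun σ _ => hpgExpVal σ
  have hm1 : 1 ≤ ∫ ω, Qf ω ∂μ := by
    rw [hQval]
    calc (1 : ℝ) = ∑ σ : SpinConf'' n, ∫ ω, pg σ ω ∂μ := hpgsum_int.symm
      _ = ∑ σ : SpinConf'' n, (∫ ω, pg σ ω ∂μ) * 1 := by simp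
      _ ≤ ∑ σ : SpinConf'' n, (∫ ω, pg σ ω ∂μ) * Real.exp (v σ / 2) := by
          refine Finset.sum_le_sum fun σ _ => ?_
          refine mul_le_mul_of_nonneg_left ?_ (hpgint_nonneg σ)
          have := Real.add_one_le_exp (v σ / 2)
          have := hvnonneg σ
          linarith
  have hm2 : ∫ ω, Qf ω ∂μ ≤ Real.exp (t * K / 2) := by
    rw [hQval]
    calc ∑ σ : SpinConf'' n, (∫ ω, pg σ ω ∂μ) * Real.exp (v σ / 2)
        ≤ ∑ σ : SpinConf'' n, (∫ ω, pg σ ω ∂μ) * Real.exp (t * K / 2) := by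
          refine Finset.sum_le_sum fun σ _ => ?_
          refine mul_le_mul_of_nonneg_left ?_ (hpgint_nonneg σ)
          refine Real.exp_le_exp.mpr ?_
          have h16 := hvle σ
          have h17 : (0:ℝ) ≤ t * K := by positivity
          linarith
      _ = Real.exp (t * K / 2) := by
          rw [← Finset.sum_mul, hpgsum_int, one_mul]
  -- integrability of log Qf
  have hlogint : Integrable (fun ω => Real.log (Qf ω)) μ := by
    refine (hint2'.sub hint1').congr (Filter.Eventually.of_forall fun ω => ?_)
    exact hlogQ ω
  -- lower bound (Jensen)
  have hjensen : ∀ ω, ∑ σ : SpinConf'' n, pg σ ω * Yf σ ω ≤ Real.log (Qf ω) := by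
    intro ω
    have hcx := convexOn_exp.map_sum_le (t := Finset.univ)
      (w := fun σ : SpinConf'' n => pg σ ω) (p := fun σ => Yf σ ω)
      (fun σ _ => hpgnonneg σ ω) (hpgsum ω) (fun σ _ => Set.mem_univ _)
    have h2 : Real.exp (∑ σ : SpinConf'' n, pg σ ω * Yf σ ω) ≤ Qf ω := by
      have hQe : Qf ω = ∑ σ : SpinConf'' n, pg σ ω * Real.exp (Yf σ ω) := by
        rw [hQf]
      rw [hQe]
      simpa [smul_eq_mul] using hcx
    calc ∑ σ : SpinConf'' n, pg σ ω * Yf σ ω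
        = Real.log (Real.exp (∑ σ : SpinConf'' n, pg σ ω * Yf σ ω)) :=
          (Real.log_exp _).symm
      _ ≤ Real.log (Qf ω) :=
          (Real.log_le_log_iff (Real.exp_pos _) (hQpos ω)).mpr h2
  have hlow : 0 ≤ ∫ ω, Real.log (Qf ω) ∂μ := by
    have hintlhs : Integrable (fun ω => ∑ σ : SpinConf'' n, pg σ ω * Yf σ ω) μ :=
      integrable_finset_sum _ (fun σ _ => hpgYint σ)
    have hzero : ∫ ω, ∑ σ : SpinConf'' n, pg σ ω * Yf σ ω ∂μ = 0 := by
      rw [integral_finset_sum _ (fun σ _ => hpgYint σ)]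
      exact Finset.sum_eq_zero fun σ _ => hpgY0 σ
    have hmono := integral_mono hintlhs hlogint hjensen
    linarith
  -- upper bound
  have hup : ∫ ω, Real.log (Qf ω) ∂μ ≤ t * K / 2 := by
    set m : ℝ := ∫ ω, Qf ω ∂μ with hm
    have hmpos : 0 < m := lt_of_lt_of_le one_pos hm1
    have hptw2 : ∀ ω, Real.log (Qf ω) ≤ Real.log m + (Qf ω / m - 1) := by
      intro ω
      have hq := Real.log_le_sub_one_of_pos (div_pos (hQpos ω) hmpos)
      rw [Real.log_div (hQpos ω).ne' hmpos.ne'] at hq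
      linarith
    have hrint : Integrable (fun ω => Real.log m + (Qf ω / m - 1)) μ :=
      (integrable_const _).add ((hQint.div_const m).sub (integrable_const 1))
    have hival : ∫ ω, (Real.log m + (Qf ω / m - 1)) ∂μ = Real.log m := by
      have hg2 : Integrable (fun ω => Qf ω / m - 1) μ :=
        (hQint.div_const m).sub (integrable_const 1)
      rw [integral_add (integrable_const _) hg2,
        integral_sub (hQint.div_const m) (integrable_const 1), integral_div,
        integral_const, integral_const]
      simp only [measure_univ, ENNReal.toReal_one, smul_eq_mul, one_mul, probReal_univ]
      rw [← hm, div_self hmpos.ne']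
      ring
    have hmono := integral_mono hlogint hrint hptw2
    rw [hival] at hmono
    have hlogm : Real.log m ≤ t * K / 2 := by
      have h18 := (Real.log_le_log_iff hmpos (Real.exp_pos _)).mpr hm2
      rwa [Real.log_exp] at h18
    linarith
  -- conclusion
  have hkeyFE : Ft - F = (1 / (n : ℝ)) *
      ∫ ω, (Real.log (Ztf ω) - Real.log (Zf ω)) ∂μ := by
    rw [hFt, hF, hiZt, hiZ, integral_sub hint2' hint1']
    ring
  have hItot : ∫ ω, (Real.log (Ztf ω) - Real.log (Zf ω)) ∂μ
      = ∫ ω, Real.log (Qf ω) ∂μ :=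
    integral_congr_ae (Filter.Eventually.of_forall fun ω => hlogQ ω)
  have hn0' : (0 : ℝ) < (n : ℝ) := by exact_mod_cast hn0
  refine ⟨hpart1, ?_, ?_⟩
  · rw [hkeyFE, hItot]
    exact mul_nonneg (by positivity) hlow
  · rw [hkeyFE, hItot]
    calc (1 / (n : ℝ)) * ∫ ω, Real.log (Qf ω) ∂μ
        ≤ (1 / (n : ℝ)) * (t * K / 2) :=
          mul_le_mul_of_nonneg_left hup (by positivity)
      _ = t * K / (2 * n) := by field_simp
end
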